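/- arXiv:1801.02530 — 5 statements merged into one kernel-verified Lean document; each statement's English description precedes it below -/
import Mathlib

section
/- Let (Ω, μ) be a probability space, let d ≥ 1, and let X₁, …, X_d be nonempty finite sets. Let G : Ω × X₁ × ⋯ × X_d → ℂ be measurable with |G| ≤ 1 everywhere. Then |E_{ω∼μ} E_{x₁∈X₁, …, x_d∈X_d}[G(ω, x₁, …, x_d)]|^{2^d} ≤ E_{ω∼μ} E[ ∏_{s∈{0,1}^d} 𝒞^{s₁+⋯+s_d} G(ω, x₁^{s₁}, …, x_d^{s_d}) ], where for each 1 ≤ j ≤ d the elements x_j^0, x_j^1 are drawn independently and uniformly from X_j, where 𝒞^k denotes complex conjugation applied when k is odd and the identity when k is even; in particular the right-hand side is a nonnegative real number. -/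
/-!
Averaging over `ω` costs nothing: by Jensen, `‖∫ F‖ ^ 2 ^ d ≤ ∫ ‖F‖ ^ 2 ^ d`, so it suffices to
bound `‖𝔼 x, g x‖ ^ 2 ^ d` for a single `g : X₁ × ⋯ × X_d → ℂ`. For a set `S` of coordinates let
`B_S` average over `x⁰, x¹` the product of `𝒞^{|T|} g(x^T)` over `T ⊆ S`, so `B_∅ = 𝔼 x, g x`.
Adding a coordinate `κ ∉ S`, the new product is `Φ(a₀) · conj Φ(a₁)`, where `a₀, a₁` are the
`κ`-coordinates of `x⁰, x¹` and `Φ` depends on the other coordinates only; hence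
`B_{S ∪ {κ}}` is an average of `|𝔼_a Φ(a)|²` and Cauchy–Schwarz gives `‖B_S‖² ≤ B_{S ∪ {κ}}`.
Inequalities `(r : ℂ) ≤ z` are in the partial order of `ℂ`, so they also say that `z` is real.
-/

open MeasureTheory

/-- `conjIter k z` applies complex conjugation to `z` when `k` is odd and is the
identity when `k` is even (the operator `𝒞^k`). -/
noncomputable def conjIter (k : ℕ) (z : ℂ) : ℂ :=
  if Even k then z else (starRingEnd ℂ) z

open Finset Function
open scoped BigOperators ComplexOrder ComplexConjugate

lemma conjIter_zero (z : ℂ) : conjIter 0 z = z := by simp [conjIter]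

lemma conjIter_succ (k : ℕ) (z : ℂ) : conjIter (k + 1) z = conj (conjIter k z) := by
  by_cases h : Even k <;> simp [conjIter, h, Nat.even_add_one]

lemma norm_conjIter (k : ℕ) (z : ℂ) : ‖conjIter k z‖ = ‖z‖ := by
  unfold conjIter; split_ifs <;> simp

@[fun_prop]
lemma measurable_conjIter (k : ℕ) : Measurable (conjIter k) := by
  unfold conjIter; split_ifs
  exacts [measurable_id, Complex.continuous_conj.measurable]

lemma le_norm_of_ofReal_le {r : ℝ} {z : ℂ} (h : (r : ℂ) ≤ z) : r ≤ ‖z‖ := by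
  simpa using (Complex.le_def.1 h).1.trans (Complex.re_le_norm z)

lemma norm_expect_le_of_norm_le {A : Type*} [Fintype A] {f : A → ℂ} {C : ℝ} (hC : 0 ≤ C)
    (hf : ∀ a, ‖f a‖ ≤ C) : ‖𝔼 a, f a‖ ≤ C := by
  rcases isEmpty_or_nonempty A with hA | hA
  · simpa using hC
  · exact (RCLike.norm_expect_le (K := ℝ)).trans (expect_le univ_nonempty fun a _ => hf a)

lemma ofReal_norm_sq_expect_le {Z A : Type*} [Fintype Z] [Fintype A] (Ψ : Z → A → ℂ) :
    ((‖𝔼 z, 𝔼 a, Ψ z a‖ ^ 2 : ℝ) : ℂ) ≤ 𝔼 z, 𝔼 a₀, 𝔼 a₁, Ψ z a₀ * conj (Ψ z a₁) := by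
  have h_sq (z : Z) : 𝔼 a₀, 𝔼 a₁, Ψ z a₀ * conj (Ψ z a₁) = ((‖𝔼 a, Ψ z a‖ ^ 2 : ℝ) : ℂ) := by
    rw [← Fintype.expect_mul_expect, ← map_expect (starRingEnd ℂ), Complex.mul_conj',
      Complex.ofReal_pow]
  simp_rw [h_sq, ← Complex.ofReal_expect, Complex.real_le_real]
  calc ‖𝔼 z, 𝔼 a, Ψ z a‖ ^ 2 ≤ (𝔼 z, ‖𝔼 a, Ψ z a‖) ^ 2 := by
        gcongr; exact RCLike.norm_expect_le (K := ℝ)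
    _ ≤ 𝔼 z, ‖𝔼 a, Ψ z a‖ ^ 2 := by
      simp only [Finset.expect_eq_sum_div_card]
      exact sum_div_card_sq_le_sum_sq_div_card

section Box
variable {ι : Type*} [DecidableEq ι] {X : ι → Type*}

noncomputable def boxProduct (g : (∀ i, X i) → ℂ) (S : Finset ι) (x₀ x₁ : ∀ i, X i) : ℂ :=
  ∏ T ∈ S.powerset, conjIter #T (g (T.piecewise x₁ x₀))

variable (g : (∀ i, X i) → ℂ) {S : Finset ι} {κ : ι}

lemma boxProduct_empty (x₀ x₁ : ∀ i, X i) : boxProduct g ∅ x₀ x₁ = g x₀ := by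
  simp [boxProduct, conjIter_zero]

lemma boxProduct_insert (hκ : κ ∉ S) (x₀ x₁ : ∀ i, X i) :
    boxProduct g (insert κ S) x₀ x₁ =
      boxProduct g S x₀ x₁ * conj (boxProduct g S (update x₀ κ (x₁ κ)) x₁) := by
  rw [boxProduct, prod_powerset_insert hκ, boxProduct, boxProduct, map_prod]
  congr 1
  refine prod_congr rfl fun T hT => ?_
  have hκT : κ ∉ T := fun h => hκ (mem_powerset.1 hT h)
  rw [card_insert_of_notMem hκT, conjIter_succ, piecewise_insert,
    update_piecewise_of_notMem _ _ _ hκT]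

lemma boxProduct_update_right (hκ : κ ∉ S) (x₀ x₁ : ∀ i, X i) (b : X κ) :
    boxProduct g S x₀ (update x₁ κ b) = boxProduct g S x₀ x₁ := by
  refine prod_congr rfl fun T hT => ?_
  congr 2
  refine T.piecewise_congr (fun i hi => update_of_ne ?_ _ _) fun _ _ => rfl
  rintro rfl
  exact hκ (mem_powerset.1 hT hi)

lemma boxProduct_univ [Fintype ι] (x₀ x₁ : ∀ i, X i) :
    boxProduct g univ x₀ x₁ = ∏ s : ι → Bool,
      conjIter (∑ i, if s i then 1 else 0) (g fun i => if s i then x₁ i else x₀ i) := by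
  rw [boxProduct, powerset_univ]
  refine Fintype.prod_equiv
    { toFun := fun T i => decide (i ∈ T), invFun := fun s => univ.filter (s ·),
      left_inv := fun T => by ext; simp, right_inv := fun s => by ext; simp } _ _ fun T => ?_
  simp only [Equiv.coe_fn_mk, decide_eq_true_eq, sum_boole, Nat.cast_id, filter_mem_eq_inter,
    univ_inter]
  rfl

variable [Fintype ι] [∀ i, Fintype (X i)]

lemma expect_piSplitAt {M : Type*} [AddCommMonoid M] [Module ℚ≥0 M] (κ : ι) (f : (∀ i, X i) → M) :
    𝔼 x, f x = 𝔼 a, 𝔼 y, f ((Equiv.piSplitAt κ X).symm (a, y)) := by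
  rw [Fintype.expect_equiv (Equiv.piSplitAt κ X) f (fun p => f ((Equiv.piSplitAt κ X).symm p))
    fun x => by rw [Equiv.symm_apply_apply], ← univ_product_univ, expect_product]

lemma expect_expect_piSplitAt {M : Type*} [AddCommMonoid M] [Module ℚ≥0 M] (κ : ι)
    (F : (∀ i, X i) → (∀ i, X i) → M) :
    𝔼 x₀, 𝔼 x₁, F x₀ x₁ =
      𝔼 y : (∀ j : {j // j ≠ κ}, X j) × (∀ j : {j // j ≠ κ}, X j), 𝔼 a₀, 𝔼 a₁,
        F ((Equiv.piSplitAt κ X).symm (a₀, y.1)) ((Equiv.piSplitAt κ X).symm (a₁, y.2)) := by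
  simp_rw [expect_piSplitAt κ]
  rw [← univ_product_univ, expect_product]
  calc _ = 𝔼 a₀, 𝔼 y₀, 𝔼 y₁, 𝔼 a₁, F ((Equiv.piSplitAt κ X).symm (a₀, y₀))
        ((Equiv.piSplitAt κ X).symm (a₁, y₁)) := by
        refine expect_congr rfl fun a₀ _ => expect_congr rfl fun y₀ _ => expect_comm ..
    _ = _ := by
      rw [expect_comm]
      exact expect_congr rfl fun y₀ _ => expect_comm ..

noncomputable def boxAverage (g : (∀ i, X i) → ℂ) (S : Finset ι) : ℂ :=
  𝔼 x₀, 𝔼 x₁, boxProduct g S x₀ x₁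

lemma boxAverage_empty : boxAverage g ∅ = 𝔼 x, g x := by
  rcases isEmpty_or_nonempty (∀ i, X i) with h | h
  · simp [boxAverage]
  · simp [boxAverage, boxProduct_empty]

lemma boxAverage_univ : boxAverage g univ =
    (∑ x₀ : ∀ i, X i, ∑ x₁ : ∀ i, X i, ∏ s : ι → Bool,
      conjIter (∑ i, if s i then 1 else 0) (g fun i => if s i then x₁ i else x₀ i)) /
      (Fintype.card (∀ i, X i) : ℂ) ^ 2 := by
  simp only [boxAverage, boxProduct_univ, Fintype.expect_eq_sum_div_card, sum_div, div_div, sq]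

lemma ofReal_norm_sq_boxAverage_le_boxAverage_insert (hκ : κ ∉ S) :
    ((‖boxAverage g S‖ ^ 2 : ℝ) : ℂ) ≤ boxAverage g (insert κ S) := by
  rcases isEmpty_or_nonempty (∀ i, X i) with hX | ⟨⟨x⟩⟩
  · simp [boxAverage]
  have : Nonempty (X κ) := ⟨x κ⟩
  simp only [boxAverage, expect_expect_piSplitAt κ]
  set e := Equiv.piSplitAt κ X
  set Ψ : (∀ j : {j // j ≠ κ}, X j) × (∀ j : {j // j ≠ κ}, X j) → X κ → ℂ :=
    fun y a => boxProduct g S (e.symm (a, y.1)) (e.symm (a, y.2))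
  have h_eval (a y) : e.symm (a, y) κ = a := by simp [e]
  have h_update (a b : X κ) (y) : update (e.symm (a, y)) κ b = e.symm (b, y) := by
    ext j
    rcases eq_or_ne j κ with rfl | hj <;> simp [e, *]
  have h_indep (a₀ a₁ y₀ y₁) :
      boxProduct g S (e.symm (a₀, y₀)) (e.symm (a₁, y₁)) = Ψ (y₀, y₁) a₀ := by
    rw [← h_update a₀ a₁ y₁, boxProduct_update_right g hκ]
  have h_insert (a₀ a₁ y₀ y₁) :
      boxProduct g (insert κ S) (e.symm (a₀, y₀)) (e.symm (a₁, y₁)) =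
        Ψ (y₀, y₁) a₀ * conj (Ψ (y₀, y₁) a₁) := by
    rw [boxProduct_insert g hκ, h_eval, h_update, h_indep, h_indep]
  simp_rw [h_indep, h_insert, Fintype.expect_const]
  exact ofReal_norm_sq_expect_le Ψ

lemma norm_expect_pow_le_norm_boxAverage (S : Finset ι) :
    ‖𝔼 x, g x‖ ^ 2 ^ #S ≤ ‖boxAverage g S‖ := by
  induction S using Finset.induction_on with
  | empty => simp [boxAverage_empty]
  | insert κ S hκ ih =>
    rw [card_insert_of_notMem hκ, pow_succ, pow_mul]
    calc (‖𝔼 x, g x‖ ^ 2 ^ #S) ^ 2 ≤ ‖boxAverage g S‖ ^ 2 := by gcongr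
      _ ≤ ‖boxAverage g (insert κ S)‖ :=
        le_norm_of_ofReal_le (ofReal_norm_sq_boxAverage_le_boxAverage_insert g hκ)

lemma ofReal_norm_expect_pow_le_boxAverage (hS : S.Nonempty) :
    ((‖𝔼 x, g x‖ ^ 2 ^ #S : ℝ) : ℂ) ≤ boxAverage g S := by
  obtain ⟨κ, hκ⟩ := hS
  have hκ' : κ ∉ S.erase κ := notMem_erase κ S
  rw [← insert_erase hκ, card_insert_of_notMem hκ', pow_succ, pow_mul]
  refine le_trans ?_ (ofReal_norm_sq_boxAverage_le_boxAverage_insert g hκ')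
  exact_mod_cast pow_le_pow_left₀ (by positivity) (norm_expect_pow_le_norm_boxAverage g _) 2

lemma norm_boxAverage_le_one (hg : ∀ x, ‖g x‖ ≤ 1) (S : Finset ι) : ‖boxAverage g S‖ ≤ 1 := by
  refine norm_expect_le_of_norm_le zero_le_one fun x₀ => norm_expect_le_of_norm_le zero_le_one
    fun x₁ => ?_
  rw [boxProduct, norm_prod]
  exact prod_le_one (fun _ _ => norm_nonneg _) fun T _ => (norm_conjIter _ _).trans_le (hg _)

lemma measurable_boxAverage {Ω : Type*} [MeasurableSpace Ω] {G : Ω → (∀ i, X i) → ℂ}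
    (hG : ∀ x, Measurable fun ω => G ω x) (S : Finset ι) :
    Measurable fun ω => boxAverage (G ω) S := by
  simp only [boxAverage, boxProduct, Finset.expect]
  fun_prop

end Box

lemma ofReal_norm_integral_pow_le_integral {Ω : Type*} [MeasurableSpace Ω] {μ : Measure Ω}
    [IsProbabilityMeasure μ] {F I : Ω → ℂ} {n : ℕ} (hF : Integrable F μ) (hI : Integrable I μ)
    (hle : ∀ ω, ((‖F ω‖ ^ n : ℝ) : ℂ) ≤ I ω) :
    ((‖∫ ω, F ω ∂μ‖ ^ n : ℝ) : ℂ) ≤ ∫ ω, I ω ∂μ := by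
  have hFn : Integrable (fun ω => ‖F ω‖ ^ n) μ :=
    hI.norm.mono' (hF.aestronglyMeasurable.norm.pow n)
      (ae_of_all _ fun ω => by simpa using le_norm_of_ofReal_le (hle ω))
  have h_jensen : ‖∫ ω, F ω ∂μ‖ ^ n ≤ ∫ ω, ‖F ω‖ ^ n ∂μ :=
    ((convexOn_norm convex_univ).pow (fun _ _ => norm_nonneg _) n).map_integral_le
      (continuous_norm.pow n).continuousOn isClosed_univ (ae_of_all _ fun _ => Set.mem_univ _)
      hF hFn
  calc ((‖∫ ω, F ω ∂μ‖ ^ n : ℝ) : ℂ) ≤ ((∫ ω, ‖F ω‖ ^ n ∂μ : ℝ) : ℂ) := by exact_mod_cast h_jensen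
    _ = ∫ ω, ((‖F ω‖ ^ n : ℝ) : ℂ) ∂μ := integral_ofReal.symm
    _ ≤ ∫ ω, I ω ∂μ := integral_mono hFn.ofReal hI hle

theorem gowers_cauchy_schwarz_general {Ω : Type*} [MeasurableSpace Ω]
    (μ : Measure Ω) [IsProbabilityMeasure μ]
    (d : ℕ) (hd : 1 ≤ d) (X : Fin d → Type*) [∀ i, Fintype (X i)]
    (G : Ω → (∀ i, X i) → ℂ)
    (hmeas : ∀ x, Measurable fun ω => G ω x)
    (hbd : ∀ ω x, ‖G ω x‖ ≤ 1) :
    ∃ R : ℝ, 0 ≤ R ∧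
      (∫ ω, (∑ x₀ : ∀ i, X i, ∑ x₁ : ∀ i, X i,
          ∏ s : Fin d → Bool,
            conjIter (∑ i, if s i then 1 else 0)
              (G ω fun i => if s i then x₁ i else x₀ i)) /
          ((Fintype.card (∀ i, X i) : ℂ)) ^ 2 ∂μ) = (R : ℂ) ∧
      ‖∫ ω, (∑ x : ∀ i, X i, G ω x) / (Fintype.card (∀ i, X i) : ℂ) ∂μ‖
          ^ (2 ^ d) ≤ R := by
  have h_box (ω : Ω) := boxAverage_univ (G ω)
  simp_rw [← h_box, ← Fintype.expect_eq_sum_div_card]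
  have h_int_avg : Integrable (fun ω => 𝔼 x, G ω x) μ :=
    Integrable.of_bound (by unfold Finset.expect; fun_prop) 1
      (ae_of_all _ fun ω => norm_expect_le_of_norm_le zero_le_one (hbd ω))
  have h_int_box : Integrable (fun ω => boxAverage (G ω) univ) μ :=
    Integrable.of_bound (measurable_boxAverage hmeas univ).aestronglyMeasurable 1
      (ae_of_all _ fun ω => norm_boxAverage_le_one (G ω) (hbd ω) univ)
  have h_univ : (univ : Finset (Fin d)).Nonempty := univ_nonempty_iff.2 ⟨⟨0, hd⟩⟩
  have key : ((‖∫ ω, 𝔼 x, G ω x ∂μ‖ ^ 2 ^ d : ℝ) : ℂ) ≤ ∫ ω, boxAverage (G ω) univ ∂μ :=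
    ofReal_norm_integral_pow_le_integral h_int_avg h_int_box fun ω => by
      simpa only [card_univ, Fintype.card_fin] using
        ofReal_norm_expect_pow_le_boxAverage (G ω) h_univ
  obtain ⟨h_re, h_im⟩ := Complex.le_def.1 key
  rw [Complex.ofReal_re] at h_re
  rw [Complex.ofReal_im] at h_im
  exact ⟨_, (pow_nonneg (norm_nonneg _) _).trans h_re, Complex.ext rfl h_im.symm, h_re⟩

/-- The Gowers–Cauchy–Schwarz inequality: if `(Ω, μ)` is a probability space,
`X₁, …, X_d` are nonempty finite sets and `G : Ω × X₁ × ⋯ × X_d → ℂ` is measurable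
with `|G| ≤ 1`, then
`|E_ω E_x G|^{2^d} ≤ E_ω E_{x⁰,x¹} ∏_{s ∈ {0,1}^d} 𝒞^{|s|} G(ω, x^s)`,
and in particular the right-hand side is a nonnegative real number. -/
theorem gowers_cauchy_schwarz {Ω : Type*} [MeasurableSpace Ω]
    (μ : Measure Ω) [IsProbabilityMeasure μ]
    (d : ℕ) (hd : 1 ≤ d) (X : Fin d → Type*) [∀ i, Fintype (X i)] [∀ i, Nonempty (X i)]
    (G : Ω → (∀ i, X i) → ℂ)
    (hmeas : ∀ x, Measurable fun ω => G ω x)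
    (hbd : ∀ ω x, ‖G ω x‖ ≤ 1) :
    ∃ R : ℝ, 0 ≤ R ∧
      (∫ ω, (∑ x₀ : ∀ i, X i, ∑ x₁ : ∀ i, X i,
          ∏ s : Fin d → Bool,
            conjIter (∑ i, if s i then 1 else 0)
              (G ω fun i => if s i then x₁ i else x₀ i)) /
          ((Fintype.card (∀ i, X i) : ℂ)) ^ 2 ∂μ) = (R : ℂ) ∧
      ‖∫ ω, (∑ x : ∀ i, X i, G ω x) / (Fintype.card (∀ i, X i) : ℂ) ∂μ‖
          ^ (2 ^ d) ≤ R :=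
  gowers_cauchy_schwarz_general μ d hd X G hmeas hbd
end

section
/- Let U_α be a generalized U-statistic with blocks (S₁, α₁), …, (S_r, α_r). For 1 ≤ a ≤ r let U_α^{0,a} denote the generalized U-statistic built from the first a blocks (S₁, α₁), …, (S_a, α_a), and let U_α^{t,a} denote the one built from the last a blocks (S_{r−a+1}, α_{r−a+1}), …, (S_r, α_r), with the convention U_α^{0,0} = U_α^{t,0} = 1. Then for all 1 ≤ N' ≤ N and every string x ∈ (ℝ^q)^N written as the concatenation x = x₀ ⊕ x_t of its first N' entries x₀ and its last N − N' entries x_t, one has the identity U_α(x) − U_α(x_t) = Σ_{a=1}^{r} U_α^{0,a}(x₀) · U_α^{t,r−a}(x_t). -/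
open MeasureTheory Finset
open scoped Classical

/-- The generalized U-statistic associated to a list of blocks
`B = [(S₁, α₁), …, (S_r, α_r)]`, where `S_k ⊆ {1,…,q}` and `α_k : {1,…,q} → ℕ`:
`U_α(x) = Σ_{1 ≤ ℓ₁ < ⋯ < ℓ_r ≤ N} ∏_{k=1}^r ∏_{c ∈ S_k} (x_{ℓ_k}^{(c)})^{α_k(c)}`. -/
noncomputable def Ustat {q : ℕ} (B : List (Finset (Fin q) × (Fin q → ℕ))) {N : ℕ}
    (x : Fin N → Fin q → ℝ) : ℝ :=
  ∑ ℓ ∈ Finset.univ.filter (fun ℓ : Fin B.length → Fin N => StrictMono ℓ),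
    ∏ k : Fin B.length, ∏ c ∈ (B.get k).1, x (ℓ k) c ^ (B.get k).2 c

/-- A valid block structure for a generalized U-statistic: `r ≥ 1`, each `S_k` is
nonempty, and each exponent `α_k(c)`, `c ∈ S_k`, is a positive integer. -/
def ValidBlocks {q : ℕ} (B : List (Finset (Fin q) × (Fin q → ℕ))) : Prop :=
  B ≠ [] ∧ ∀ p ∈ B, p.1.Nonempty ∧ ∀ c ∈ p.1, 0 < p.2 c

/-- The homogeneous degree of a monomial with exponent vector `β`, with respect to the
weight function `w` assigning a homogeneous degree to each coordinate. -/
def homDeg {q : ℕ} (w : Fin q → ℕ) (β : Fin q → ℕ) : ℕ := ∑ c, w c * β c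

/-- The homogeneous degree `Σ_{k=1}^r Σ_{c ∈ S_k} w(c)·α_k(c)` of a generalized
U-statistic with blocks `B`. -/
def ustatHomDeg {q : ℕ} (w : Fin q → ℕ) (B : List (Finset (Fin q) × (Fin q → ℕ))) : ℕ :=
  (B.map fun p => ∑ c ∈ p.1, w c * p.2 c).sum

/-- `μ` has `d` finite homogeneous moments: `∫ ∏_c |x^{(c)}|^{β_c} dμ < ∞` for every
monomial of homogeneous degree at most `d`. -/
def HasFiniteHomMoments {q : ℕ} (w : Fin q → ℕ) (μ : Measure (Fin q → ℝ)) (d : ℕ) : Prop :=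
  ∀ β : Fin q → ℕ, homDeg w β ≤ d → Integrable (fun x : Fin q → ℝ => ∏ c, |x c| ^ β c) μ

/-- `μ` is centered: every degree-1 coordinate has mean zero. -/
def IsCenteredMeasure {q : ℕ} (w : Fin q → ℕ) (μ : Measure (Fin q → ℝ)) : Prop :=
  ∀ c, w c = 1 → ∫ x, x c ∂μ = 0

/-! The U-statistic is the case `φ = blockMonomial` of the iterated sum
`S(B, z) = ∑_{ℓ₁ < ⋯ < ℓ_r} ∏_k φ(B_k, z_{ℓ_k})` of a list of blocks `B` over a string `z`.
Splitting the index tuples by whether `ℓ₁` picks the first entry of the string gives the recursion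
`S(p :: B, v :: z) = φ(p, v) S(B, z) + S(p :: B, z)`, and induction on the length of `x₀` with
this recursion yields Chen's identity `S(B, x₀ ++ xₜ) = ∑_{a=0}^r S(B_{≤a}, x₀) S(B_{>a}, xₜ)`.
Its `a = 0` term is `U_α(xₜ)`. -/

section StrictMonoFin

variable {M : Type*} [AddCommMonoid M] {r N : ℕ}

theorem sum_strictMono_apply_zero_eq_zero (F : (Fin (r + 1) → Fin (N + 1)) → M) :
    ∑ ℓ ∈ univ.filter (fun ℓ : Fin (r + 1) → Fin (N + 1) => StrictMono ℓ ∧ ℓ 0 = 0), F ℓ =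
      ∑ ℓ ∈ univ.filter (fun ℓ : Fin r → Fin N => StrictMono ℓ),
        F (Fin.cons 0 (Fin.succ ∘ ℓ)) := by
  refine sum_bij'
    (fun ℓ hℓ k => (ℓ k.succ).pred (Fin.ne_zero_of_lt ((mem_filter.1 hℓ).2.1 k.succ_pos)))
    (fun ℓ _ => Fin.cons 0 (Fin.succ ∘ ℓ)) (fun ℓ hℓ => ?_) (fun ℓ hℓ => ?_) (fun ℓ hℓ => ?_)
    (fun ℓ _ => ?_) (fun ℓ hℓ => ?_)
  · simp only [mem_filter, mem_univ, true_and]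
    intro i j hij
    simpa [Fin.pred_lt_pred_iff] using (mem_filter.1 hℓ).2.1 (Fin.succ_lt_succ_iff.2 hij)
  · simp only [mem_filter, mem_univ, true_and] at hℓ ⊢
    exact ⟨Fin.strictMono_cons.2 ⟨fun j => Fin.succ_pos _, Fin.strictMono_succ.comp hℓ⟩, rfl⟩
  · ext1 k
    refine Fin.cases ?_ (fun k => ?_) k <;> simp [(mem_filter.1 hℓ).2.2]
  · ext1 k
    simp
  · congr 1
    ext1 k
    refine Fin.cases ?_ (fun k => ?_) k <;> simp [(mem_filter.1 hℓ).2.2]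

theorem sum_strictMono_apply_zero_ne_zero (F : (Fin (r + 1) → Fin (N + 1)) → M) :
    ∑ ℓ ∈ univ.filter (fun ℓ : Fin (r + 1) → Fin (N + 1) => StrictMono ℓ ∧ ¬ℓ 0 = 0), F ℓ =
      ∑ ℓ ∈ univ.filter (fun ℓ : Fin (r + 1) → Fin N => StrictMono ℓ), F (Fin.succ ∘ ℓ) := by
  refine sum_bij' (fun ℓ hℓ k => (ℓ k).pred fun h => (mem_filter.1 hℓ).2.2
      (nonpos_iff_eq_zero.1 (h ▸ (mem_filter.1 hℓ).2.1.monotone (Fin.zero_le k))))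
    (fun ℓ _ => Fin.succ ∘ ℓ) (fun ℓ hℓ => ?_) (fun ℓ hℓ => ?_) (fun ℓ _ => ?_)
    (fun ℓ _ => ?_) (fun ℓ _ => ?_)
  · simp only [mem_filter, mem_univ, true_and]
    intro i j hij
    simpa [Fin.pred_lt_pred_iff] using (mem_filter.1 hℓ).2.1 hij
  · simp only [mem_filter, mem_univ, true_and] at hℓ ⊢
    exact ⟨Fin.strictMono_succ.comp hℓ, Fin.succ_ne_zero _⟩
  · ext1 k
    simp
  · ext1 k
    simp
  · congr 1
    ext1 k
    simp

end StrictMonoFin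

section IteratedSum

variable {α β R : Type*} [CommSemiring R] (φ : β → α → R)

noncomputable def iteratedSum (B : List β) {N : ℕ} (z : Fin N → α) : R :=
  ∑ ℓ ∈ univ.filter (fun ℓ : Fin B.length → Fin N => StrictMono ℓ),
    ∏ k, φ (B.get k) (z (ℓ k))

@[simp]
theorem iteratedSum_nil {N : ℕ} (z : Fin N → α) : iteratedSum φ [] z = 1 := by
  simp [iteratedSum, Subsingleton.strictMono]

@[simp]
theorem iteratedSum_cons_of_fin_zero (p : β) (B : List β) (z : Fin 0 → α) :
    iteratedSum φ (p :: B) z = 0 := by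
  simp [iteratedSum]

theorem iteratedSum_comp_cast (B : List β) {M N : ℕ} (h : N = M) (z : Fin M → α) :
    iteratedSum φ B (z ∘ Fin.cast h) = iteratedSum φ B z := by
  subst h
  rfl

theorem iteratedSum_cons_cons (p : β) (B : List β) {N : ℕ} (v : α) (z : Fin N → α) :
    iteratedSum φ (p :: B) (Fin.cons v z : Fin (N + 1) → α) =
      φ p v * iteratedSum φ B z + iteratedSum φ (p :: B) z := by
  rw [iteratedSum, ← sum_filter_add_sum_filter_not _ (fun ℓ => ℓ 0 = 0), filter_filter,
    filter_filter]
  erw [sum_strictMono_apply_zero_eq_zero, sum_strictMono_apply_zero_ne_zero]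
  simp [iteratedSum, mul_sum, Fin.prod_univ_succ]

theorem iteratedSum_append (B : List β) {m n : ℕ} (x : Fin m → α) (y : Fin n → α) :
    iteratedSum φ B (Fin.append x y) =
      ∑ a ∈ range (B.length + 1), iteratedSum φ (B.take a) x * iteratedSum φ (B.drop a) y := by
  induction m generalizing B with
  | zero =>
    rw [Fin.append_left_nil x y rfl, iteratedSum_comp_cast]
    cases B with
    | nil => simp
    | cons p B => simp [sum_range_succ']
  | succ m ih =>
    induction x using Fin.consCases with
    | cons v x =>
      rw [Fin.append_cons, iteratedSum_comp_cast]
      cases B with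
      | nil => simp
      | cons p B =>
        rw [iteratedSum_cons_cons, ih, ih]
        simp [sum_range_succ' _ (B.length + 1), iteratedSum_cons_cons, add_mul, sum_add_distrib,
          mul_sum, mul_assoc, add_assoc]

end IteratedSum

def blockMonomial {q : ℕ} (p : Finset (Fin q) × (Fin q → ℕ)) (v : Fin q → ℝ) : ℝ :=
  ∏ c ∈ p.1, v c ^ p.2 c

theorem Ustat_eq_iteratedSum {q N : ℕ} (B : List (Finset (Fin q) × (Fin q → ℕ)))
    (x : Fin N → Fin q → ℝ) : Ustat B x = iteratedSum blockMonomial B x :=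
  rfl

/-- Decomposition of a generalized U-statistic over a split of the string:
`U_α(x) − U_α(x_t) = Σ_{a=1}^r U_α^{0,a}(x₀) · U_α^{t,r−a}(x_t)`, where `x₀` is the
first `N'` entries of `x`, `x_t` the last `N − N'` entries, `U_α^{0,a}` is built from
the first `a` blocks and `U_α^{t,r−a}` from the last `r − a` blocks (with the
convention that the empty U-statistic is `1`). -/
theorem ustat_split {q : ℕ}
    (B : List (Finset (Fin q) × (Fin q → ℕ)))
    (N N' : ℕ) (h2 : N' ≤ N) (x : Fin N → Fin q → ℝ) :
    Ustat B x -
        Ustat B (fun i : Fin (N - N') => x (Fin.cast (by omega) (Fin.natAdd N' i))) =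
      ∑ a ∈ Finset.Icc 1 B.length,
        Ustat (B.take a) (fun i : Fin N' => x (Fin.castLE h2 i)) *
          Ustat (B.drop a)
            (fun i : Fin (N - N') => x (Fin.cast (by omega) (Fin.natAdd N' i))) := by
  set x₀ := fun i : Fin N' => x (Fin.castLE h2 i)
  set xₜ := fun i : Fin (N - N') => x (Fin.cast (by omega) (Fin.natAdd N' i))
  have hN : N = N' + (N - N') := by omega
  have hx : x = Fin.append x₀ xₜ ∘ Fin.cast hN := by
    ext1 i
    exact (congrFun (Fin.append_castAdd_natAdd (f := x ∘ Fin.cast hN.symm)) (Fin.cast hN i)).symm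
  have hchen :
      Ustat B x = ∑ a ∈ range (B.length + 1), Ustat (B.take a) x₀ * Ustat (B.drop a) xₜ := by
    rw [hx, Ustat_eq_iteratedSum, iteratedSum_comp_cast, iteratedSum_append]
    rfl
  rw [hchen, sum_range_eq_add_Ico _ B.length.add_one_pos, Ico_add_one_right_eq_Icc]
  simp [Ustat_eq_iteratedSum]
end

section
/- Let m, n, N ≥ 1 and let μ be a centered Borel probability measure on ℝ^q with 2mn finite homogeneous moments. Then for every generalized U-statistic U_α of homogeneous degree n there exists a constant C = C(μ, q, m, n) > 0, independent of N, such that E_{x ∼ μ^{⊗N}}[ |U_α(x)|^{2m} ] ≤ C · N^{mn}. -/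
open MeasureTheory Finset
open scoped Classical

/-!
Expanding `U^{2m}` gives a sum, over `2m`-tuples of index tuples, of products of monomials placed
at the sites `1, …, N`. By independence each term has expectation equal to the product over sites
of the moment of the monomial collected at that site. Centering kills every term in which some
site carries homogeneous degree one; in the surviving terms every occupied site carries degree at
least two, and since the total degree is `2mn`, at most `mn` sites are occupied. There are
`O(N^{mn})` such placements, and each term is bounded by a product of at most `mn` moments.
-/

namespace UStat

variable {q : ℕ} {w : Fin q → ℕ} {μ : Measure (Fin q → ℝ)}

noncomputable def monomial (β : Fin q → ℕ) (y : Fin q → ℝ) : ℝ := ∏ c, y c ^ β c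

@[simp] lemma monomial_zero (y : Fin q → ℝ) : monomial 0 y = 1 := by simp [monomial]

lemma monomial_sum {ι : Type*} (s : Finset ι) (E : ι → Fin q → ℕ) (y : Fin q → ℝ) :
    monomial (∑ a ∈ s, E a) y = ∏ a ∈ s, monomial (E a) y := by
  simp only [monomial, Finset.sum_apply, ← Finset.prod_pow_eq_pow_sum]
  exact Finset.prod_comm

lemma measurable_monomial (β : Fin q → ℕ) : Measurable (monomial β) :=
  Finset.measurable_prod _ fun c _ => (measurable_pi_apply c).pow_const _

lemma integrable_monomial {d : ℕ} (hmom : HasFiniteHomMoments w μ d) {β : Fin q → ℕ}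
    (hβ : homDeg w β ≤ d) : Integrable (monomial β) μ := by
  refine (hmom β hβ).mono' (measurable_monomial β).aestronglyMeasurable (ae_of_all _ fun y => ?_)
  simp [monomial]

lemma homDeg_sum {ι : Type*} (s : Finset ι) (E : ι → Fin q → ℕ) :
    homDeg w (∑ a ∈ s, E a) = ∑ a ∈ s, homDeg w (E a) := by
  simp only [homDeg, Finset.sum_apply, Finset.mul_sum]
  exact Finset.sum_comm

lemma homDeg_mono {β β' : Fin q → ℕ} (h : β ≤ β') : homDeg w β ≤ homDeg w β' :=
  Finset.sum_le_sum fun c _ => Nat.mul_le_mul_left _ (h c)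

lemma le_homDeg (hw : ∀ c, 1 ≤ w c) (β : Fin q → ℕ) (c : Fin q) : β c ≤ homDeg w β :=
  calc β c ≤ w c * β c := Nat.le_mul_of_pos_left _ (hw c)
    _ ≤ homDeg w β := Finset.single_le_sum (f := fun c => w c * β c) (by simp) (mem_univ c)

lemma finite_setOf_homDeg_le (hw : ∀ c, 1 ≤ w c) (d : ℕ) :
    {β : Fin q → ℕ | homDeg w β ≤ d}.Finite :=
  (Set.finite_Iic fun _ => d).subset fun β hβ c => (le_homDeg hw β c).trans hβ

lemma exists_abs_integral_monomial_le (hw : ∀ c, 1 ≤ w c) (μ : Measure (Fin q → ℝ)) (d : ℕ) :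
    ∃ K, 1 ≤ K ∧ ∀ β, homDeg w β ≤ d → |∫ y, monomial β y ∂μ| ≤ K := by
  obtain ⟨K, hK⟩ := ((finite_setOf_homDeg_le hw d).image fun β => |∫ y, monomial β y ∂μ|).bddAbove
  exact ⟨max K 1, le_max_right _ _, fun β hβ => (hK ⟨β, hβ, rfl⟩).trans (le_max_left _ _)⟩

/-- A monomial of homogeneous degree one is a single coordinate of weight one. -/
lemma integral_monomial_eq_zero_of_homDeg_eq_one (hw : ∀ c, 1 ≤ w c)
    (hcent : IsCenteredMeasure w μ) {β : Fin q → ℕ} (hβ : homDeg w β = 1) :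
    ∫ y, monomial β y ∂μ = 0 := by
  obtain ⟨c, -, hc⟩ := Finset.exists_ne_zero_of_sum_ne_zero (hβ.trans_ne one_ne_zero)
  have hpair : ∀ c' ≠ c, w c * β c + w c' * β c' ≤ 1 := fun c' hc' => by
    rw [← hβ, homDeg, ← Finset.sum_pair (f := fun c => w c * β c) hc'.symm]
    exact Finset.sum_le_sum_of_subset (Finset.subset_univ _)
  have hc1 : w c * β c = 1 := by
    have := Finset.single_le_sum (f := fun c => w c * β c) (by simp) (mem_univ c)
    rw [← homDeg, hβ] at this
    omega
  obtain ⟨hwc, hβc⟩ := mul_eq_one.1 hc1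
  have hcoord : ∀ y, monomial β y = y c := fun y => by
    rw [monomial, Finset.prod_eq_single c (fun c' _ hc' => ?_) (by simp), hβc, pow_one]
    have h0 : w c' * β c' = 0 := by have := hpair c' hc'; omega
    rw [(mul_eq_zero.1 h0).resolve_left (Nat.one_le_iff_ne_zero.1 (hw c')), pow_zero]
  simp_rw [hcoord]
  exact hcent c hwc

section Placement

variable {ι κ : Type*} [Fintype ι] [DecidableEq κ]

def siteExp (E : ι → Fin q → ℕ) (V : ι → κ) (i : κ) : Fin q → ℕ :=
  ∑ a ∈ univ.filter (fun a => V a = i), E a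

lemma le_siteExp (E : ι → Fin q → ℕ) (V : ι → κ) (a : ι) : E a ≤ siteExp E V (V a) :=
  Finset.single_le_sum (f := E) (fun _ _ => zero_le) (by simp)

variable [Fintype κ]

lemma prod_monomial_comp_eq_prod_siteExp (E : ι → Fin q → ℕ) (V : ι → κ) (x : κ → Fin q → ℝ) :
    ∏ a, monomial (E a) (x (V a)) = ∏ i, monomial (siteExp E V i) (x i) := by
  rw [← Finset.prod_fiberwise univ V]
  refine Finset.prod_congr rfl fun i _ => ?_
  rw [siteExp, monomial_sum]
  exact Finset.prod_congr rfl fun a ha => by rw [(Finset.mem_filter.1 ha).2]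

lemma sum_homDeg_siteExp (E : ι → Fin q → ℕ) (V : ι → κ) :
    ∑ i, homDeg w (siteExp E V i) = ∑ a, homDeg w (E a) := by
  simp only [siteExp, homDeg_sum]
  exact Finset.sum_fiberwise univ V _

lemma homDeg_siteExp_le (E : ι → Fin q → ℕ) (V : ι → κ) (i : κ) :
    homDeg w (siteExp E V i) ≤ ∑ a, homDeg w (E a) :=
  (sum_homDeg_siteExp E V).le.trans' <|
    Finset.single_le_sum (f := fun i => homDeg w (siteExp E V i)) (by simp) (mem_univ i)

lemma integral_prod_monomial_comp [SigmaFinite μ] (E : ι → Fin q → ℕ) (V : ι → κ) :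
    ∫ x, ∏ a, monomial (E a) (x (V a)) ∂(Measure.pi fun _ : κ => μ) =
      ∏ i, ∫ y, monomial (siteExp E V i) y ∂μ := by
  simp_rw [prod_monomial_comp_eq_prod_siteExp E V]
  exact integral_fintype_prod_eq_prod _

lemma integrable_prod_monomial_comp [SigmaFinite μ] {d : ℕ} (hmom : HasFiniteHomMoments w μ d)
    {E : ι → Fin q → ℕ} (hE : ∑ a, homDeg w (E a) ≤ d) (V : ι → κ) :
    Integrable (fun x => ∏ a, monomial (E a) (x (V a))) (Measure.pi fun _ : κ => μ) := by
  simp_rw [prod_monomial_comp_eq_prod_siteExp E V]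
  exact Integrable.fintype_prod fun i =>
    integrable_monomial hmom ((homDeg_siteExp_le E V i).trans hE)

end Placement

section Counting

variable {ι κ : Type*} [Fintype ι] [Fintype κ] [DecidableEq κ]

/-- A map whose image has at most `D` points factors through `Fin D`. -/
lemma card_filter_card_image_le [Nonempty κ] (D : ℕ) :
    #{V : ι → κ | #(univ.image V) ≤ D} ≤ Fintype.card κ ^ D * D ^ Fintype.card ι := by
  have hsub : ({V : ι → κ | #(univ.image V) ≤ D} : Finset (ι → κ)) ⊆
      univ.image fun p : (Fin D → κ) × (ι → Fin D) => p.1 ∘ p.2 := by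
    intro V hV
    let f : univ.image V ↪ Fin D :=
      (univ.image V).equivFin.toEmbedding.trans (Fin.castLEEmb (Finset.mem_filter.1 hV).2)
    refine Finset.mem_image.2 ⟨(Function.extend f Subtype.val fun _ => Classical.arbitrary κ,
      fun a => f ⟨V a, Finset.mem_image_of_mem V (mem_univ a)⟩), mem_univ _, funext fun a => ?_⟩
    show Function.extend f Subtype.val (fun _ => Classical.arbitrary κ) (f ⟨V a, _⟩) = V a
    exact f.injective.extend_apply _ _ _
  calc #{V : ι → κ | #(univ.image V) ≤ D}
      ≤ #(univ.image fun p : (Fin D → κ) × (ι → Fin D) => p.1 ∘ p.2) := card_le_card hsub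
    _ ≤ Fintype.card κ ^ D * D ^ Fintype.card ι := card_image_le.trans (by simp)

end Counting

section Moments

variable {ι κ : Type*} [Fintype ι] [Fintype κ] [DecidableEq κ] {D : ℕ} {E : ι → Fin q → ℕ}

/-- Every occupied site carries degree at least one; if none carried degree exactly one, each
would carry at least two, and total degree `2 * D` leaves room for at most `D` of them. -/
lemma prod_integral_monomial_siteExp_eq_zero (hw : ∀ c, 1 ≤ w c) (hcent : IsCenteredMeasure w μ)
    (hE : ∀ a, 1 ≤ homDeg w (E a)) (hsum : ∑ a, homDeg w (E a) ≤ 2 * D) {V : ι → κ}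
    (hV : D < #(univ.image V)) : ∏ i, ∫ y, monomial (siteExp E V i) y ∂μ = 0 := by
  obtain ⟨i, hi⟩ : ∃ i, homDeg w (siteExp E V i) = 1 := by
    by_contra! hne
    have htwo : ∀ i ∈ univ.image V, 2 ≤ homDeg w (siteExp E V i) := by
      simp only [Finset.mem_image, mem_univ, true_and, forall_exists_index]
      rintro _ a rfl
      have := (hE a).trans (homDeg_mono (le_siteExp E V a))
      have := hne (V a)
      omega
    have := calc 2 * #(univ.image V) = ∑ i ∈ univ.image V, 2 := by simp [mul_comm]
      _ ≤ ∑ i ∈ univ.image V, homDeg w (siteExp E V i) := Finset.sum_le_sum htwo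
      _ ≤ ∑ i, homDeg w (siteExp E V i) := Finset.sum_le_sum_of_subset (Finset.subset_univ _)
      _ ≤ 2 * D := (sum_homDeg_siteExp E V).trans_le hsum
    omega
  exact Finset.prod_eq_zero (mem_univ i) (integral_monomial_eq_zero_of_homDeg_eq_one hw hcent hi)

variable [IsProbabilityMeasure μ]

lemma abs_prod_integral_monomial_siteExp_le {d : ℕ} {K : ℝ}
    (hK : ∀ β, homDeg w β ≤ d → |∫ y, monomial β y ∂μ| ≤ K) (hsum : ∑ a, homDeg w (E a) ≤ d)
    (V : ι → κ) : |∏ i, ∫ y, monomial (siteExp E V i) y ∂μ| ≤ K ^ #(univ.image V) := by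
  have hvacant : ∀ i ∉ univ.image V, siteExp E V i = 0 := fun i hi => by
    simp_all [siteExp, Finset.filter_false_of_mem]
  rw [Finset.abs_prod, ← Finset.prod_subset (Finset.subset_univ _) fun i _ hi => by
    simp [hvacant i hi]]
  exact (Finset.prod_le_prod (fun i _ => abs_nonneg _) fun i _ =>
    hK _ ((homDeg_siteExp_le E V i).trans hsum)).trans_eq (Finset.prod_const K)

variable {K : ℝ}

lemma sum_abs_prod_integral_monomial_siteExp_le [Nonempty κ] (hw : ∀ c, 1 ≤ w c)
    (hcent : IsCenteredMeasure w μ) (hK1 : 1 ≤ K)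
    (hK : ∀ β, homDeg w β ≤ 2 * D → |∫ y, monomial β y ∂μ| ≤ K)
    (hE : ∀ a, 1 ≤ homDeg w (E a)) (hsum : ∑ a, homDeg w (E a) ≤ 2 * D) :
    ∑ V : ι → κ, |∏ i, ∫ y, monomial (siteExp E V i) y ∂μ| ≤
      Fintype.card κ ^ D * D ^ Fintype.card ι * K ^ D := by
  calc ∑ V : ι → κ, |∏ i, ∫ y, monomial (siteExp E V i) y ∂μ|
      ≤ ∑ V : ι → κ, if #(univ.image V) ≤ D then K ^ D else 0 := by
        refine Finset.sum_le_sum fun V _ => ?_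
        split_ifs with hV
        · exact (abs_prod_integral_monomial_siteExp_le hK hsum V).trans (pow_le_pow_right₀ hK1 hV)
        · rw [prod_integral_monomial_siteExp_eq_zero hw hcent hE hsum (not_le.1 hV), abs_zero]
    _ = #{V : ι → κ | #(univ.image V) ≤ D} * K ^ D := by
        rw [Finset.sum_ite, Finset.sum_const_zero, add_zero, Finset.sum_const, nsmul_eq_mul]
    _ ≤ Fintype.card κ ^ D * D ^ Fintype.card ι * K ^ D := by
        gcongr
        exact_mod_cast card_filter_card_image_le D

theorem integral_sum_prod_monomial_le [Nonempty κ] (hw : ∀ c, 1 ≤ w c)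
    (hcent : IsCenteredMeasure w μ) (hmom : HasFiniteHomMoments w μ (2 * D)) (hK1 : 1 ≤ K)
    (hK : ∀ β, homDeg w β ≤ 2 * D → |∫ y, monomial β y ∂μ| ≤ K)
    (hE : ∀ a, 1 ≤ homDeg w (E a)) (hsum : ∑ a, homDeg w (E a) ≤ 2 * D)
    (𝒱 : Finset (ι → κ)) :
    ∫ x, ∑ V ∈ 𝒱, ∏ a, monomial (E a) (x (V a)) ∂(Measure.pi fun _ : κ => μ) ≤
      Fintype.card κ ^ D * D ^ Fintype.card ι * K ^ D := by
  rw [integral_finsetSum 𝒱 fun V _ => integrable_prod_monomial_comp hmom hsum V]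
  simp_rw [integral_prod_monomial_comp]
  calc ∑ V ∈ 𝒱, ∏ i, ∫ y, monomial (siteExp E V i) y ∂μ
      ≤ ∑ V, |∏ i, ∫ y, monomial (siteExp E V i) y ∂μ| :=
        (Finset.sum_le_sum fun V _ => le_abs_self _).trans
          (Finset.sum_le_sum_of_subset_of_nonneg (Finset.subset_univ _) fun _ _ _ => abs_nonneg _)
    _ ≤ _ := sum_abs_prod_integral_monomial_siteExp_le hw hcent hK1 hK hE hsum

end Moments

section Blocks

def blockExp (B : List (Finset (Fin q) × (Fin q → ℕ))) (k : Fin B.length) : Fin q → ℕ :=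
  fun c => if c ∈ (B.get k).1 then (B.get k).2 c else 0

variable {B : List (Finset (Fin q) × (Fin q → ℕ))}

lemma homDeg_blockExp (k : Fin B.length) :
    homDeg w (blockExp B k) = ∑ c ∈ (B.get k).1, w c * (B.get k).2 c := by
  simp [homDeg, blockExp, mul_ite, Finset.sum_ite_mem]

lemma sum_homDeg_blockExp : ∑ k, homDeg w (blockExp B k) = ustatHomDeg w B := by
  simp only [homDeg_blockExp, ustatHomDeg, List.get_eq_getElem]
  exact Fin.sum_univ_fun_getElem B fun p => ∑ c ∈ p.1, w c * p.2 c

lemma one_le_homDeg_blockExp (hw : ∀ c, 1 ≤ w c) (hB : ValidBlocks B) (k : Fin B.length) :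
    1 ≤ homDeg w (blockExp B k) := by
  obtain ⟨⟨c, hc⟩, hpos⟩ := hB.2 (B.get k) (List.get_mem B k)
  rw [homDeg_blockExp]
  exact (Nat.mul_le_mul (hw c) (hpos c hc)).trans
    (Finset.single_le_sum (f := fun c => w c * (B.get k).2 c) (by simp) hc)

lemma ustat_eq_sum_prod_monomial {N : ℕ} (x : Fin N → Fin q → ℝ) :
    Ustat B x = ∑ ℓ ∈ univ.filter (fun ℓ : Fin B.length → Fin N => StrictMono ℓ),
      ∏ k, monomial (blockExp B k) (x (ℓ k)) := by
  simp [Ustat, monomial, blockExp, pow_ite, Finset.prod_ite_mem]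

lemma ustat_pow_eq_sum_prod_monomial {N : ℕ} (p : ℕ) (x : Fin N → Fin q → ℝ) :
    Ustat B x ^ p = ∑ V ∈ (Fintype.piFinset fun _ : Fin p =>
        univ.filter (fun ℓ : Fin B.length → Fin N => StrictMono ℓ)).map
          (Equiv.curry _ _ _).symm.toEmbedding,
      ∏ a : Fin p × Fin B.length, monomial (blockExp B a.2) (x (V a)) := by
  rw [ustat_eq_sum_prod_monomial, Finset.sum_pow', Finset.sum_map]
  simp [Fintype.prod_prod_type]

end Blocks

end UStat

open UStat

theorem ustat_moment_bound_general {q s : ℕ}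
    (w : Fin q → ℕ) (hw : ∀ c, 1 ≤ w c ∧ w c ≤ s)
    (m n : ℕ)
    (μ : Measure (Fin q → ℝ)) [IsProbabilityMeasure μ]
    (hcent : IsCenteredMeasure w μ)
    (hmom : HasFiniteHomMoments w μ (2 * m * n))
    (B : List (Finset (Fin q) × (Fin q → ℕ))) (hB : ValidBlocks B)
    (hdeg : ustatHomDeg w B = n) :
    ∃ C : ℝ, 0 < C ∧ ∀ N : ℕ, 1 ≤ N →
      (∫ x, |Ustat B x| ^ (2 * m) ∂(Measure.pi fun _ : Fin N => μ)) ≤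
        C * (N : ℝ) ^ (m * n) := by
  have hw1 : ∀ c, 1 ≤ w c := fun c => (hw c).1
  rw [mul_assoc] at hmom
  obtain ⟨K, hK1, hK⟩ := exists_abs_integral_monomial_le hw1 μ (2 * (m * n))
  refine ⟨(m * n + 1) ^ (2 * m * B.length) * K ^ (m * n), by positivity, fun N hN => ?_⟩
  have : Nonempty (Fin N) := ⟨⟨0, hN⟩⟩
  have hsum : ∑ a : Fin (2 * m) × Fin B.length, homDeg w (blockExp B a.2) ≤ 2 * (m * n) := by
    simp [Fintype.sum_prod_type, sum_homDeg_blockExp, hdeg, mul_assoc]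
  have hbound := integral_sum_prod_monomial_le (κ := Fin N) (D := m * n)
    (E := fun a : Fin (2 * m) × Fin B.length => blockExp B a.2) hw1 hcent hmom hK1 hK
    (fun a => one_le_homDeg_blockExp hw1 hB a.2) hsum
  simp only [Fintype.card_fin, Fintype.card_prod] at hbound
  simp_rw [pow_abs_two_mul, ustat_pow_eq_sum_prod_monomial]
  calc _ ≤ _ := hbound _
    _ = ((m * n : ℕ) : ℝ) ^ (2 * m * B.length) * K ^ (m * n) * (N : ℝ) ^ (m * n) := by ring
    _ ≤ _ := by
        gcongr
        push_cast
        linarith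

/-- Let `m, n ≥ 1` and let `μ` be a centered Borel probability measure on `ℝ^q` with
`2mn` finite homogeneous moments.  For every generalized U-statistic `U_α` of
homogeneous degree `n` there is a constant `C = C(μ, q, m, n) > 0`, independent of `N`,
such that `E_{x ∼ μ^{⊗N}}[|U_α(x)|^{2m}] ≤ C · N^{mn}` for all `N ≥ 1`. -/
theorem ustat_moment_bound {q s : ℕ} (hq : 1 ≤ q) (hs : 1 ≤ s)
    (w : Fin q → ℕ) (hw : ∀ c, 1 ≤ w c ∧ w c ≤ s)
    (m n : ℕ) (hm : 1 ≤ m) (hn : 1 ≤ n)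
    (μ : Measure (Fin q → ℝ)) [IsProbabilityMeasure μ]
    (hcent : IsCenteredMeasure w μ)
    (hmom : HasFiniteHomMoments w μ (2 * m * n))
    (B : List (Finset (Fin q) × (Fin q → ℕ))) (hB : ValidBlocks B)
    (hdeg : ustatHomDeg w B = n) :
    ∃ C : ℝ, 0 < C ∧ ∀ N : ℕ, 1 ≤ N →
      (∫ x, |Ustat B x| ^ (2 * m) ∂(Measure.pi fun _ : Fin N => μ)) ≤
        C * (N : ℝ) ^ (m * n) :=
  ustat_moment_bound_general w hw m n μ hcent hmom B hB hdeg
end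

section
/- Let m ≥ 1 and n ≥ 1, and let μ be a centered Borel probability measure on ℝ^q with 2mn finite homogeneous moments. Let U_α be a generalized U-statistic of homogeneous degree at most n. There is a constant C = C(μ, q, m, n) > 0 such that for all 1 ≤ N' ≤ N, writing a random string x ∼ μ^{⊗N} as the concatenation x = x₀ ⊕ x_t of its first N' entries x₀ and its last N − N' entries x_t, one has E[ |U_α(x) − U_α(x_t)|^{2m} ] ≤ C · N^{mn} · (N'/N)^m. -/
open MeasureTheory Finset
open scoped Classical

/-!
On a string `x`, `U_α(x) - U_α(x_t)` is the sum, over the index tuples `ℓ` meeting the head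
`{0, …, N' - 1}`, of products of one monomial per block. Expanding the `2m`-th power and
integrating against `μ^{⊗N}` factorises every term into one-site moments, indexed by the
sites the `2m` tuples occupy. A term vanishes as soon as some site carries homogeneous degree
exactly `1` (centering); otherwise every occupied site carries degree at least `2` and every term
is bounded by a constant depending only on `μ`, `q`, `m`, `n`. The total degree is
`2m · deg U_α ≤ 2mn`, so if such a term occupies `a` head sites and `b` tail sites then
`a + b ≤ mn`; since each of the `2m` tuples meets the head, also `m + b ≤ mn`. There are
`O(N'^a N^b) ≤ O(N'^m N^(mn - m))` such terms.
-/

namespace Ustat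

variable {q : ℕ}

noncomputable def monomial (β : Fin q → ℕ) (y : Fin q → ℝ) : ℝ := ∏ c, y c ^ β c

lemma monomial_sum {ι : Type*} (s : Finset ι) (β : ι → Fin q → ℕ) (y : Fin q → ℝ) :
    monomial (∑ p ∈ s, β p) y = ∏ p ∈ s, monomial (β p) y := by
  simp only [monomial, Finset.sum_apply, ← prod_pow_eq_pow_sum]
  exact prod_comm

lemma homDeg_sum (w : Fin q → ℕ) {ι : Type*} (s : Finset ι) (β : ι → Fin q → ℕ) :
    homDeg w (∑ p ∈ s, β p) = ∑ p ∈ s, homDeg w (β p) := by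
  simp only [homDeg, Finset.sum_apply, mul_sum]
  exact sum_comm

lemma le_homDeg {w : Fin q → ℕ} (hw : ∀ c, 1 ≤ w c) (β : Fin q → ℕ) (c : Fin q) :
    β c ≤ homDeg w β :=
  calc β c ≤ w c * β c := Nat.le_mul_of_pos_left _ (hw c)
    _ ≤ homDeg w β :=
      single_le_sum (f := fun c => w c * β c) (fun _ _ => Nat.zero_le _) (mem_univ c)

lemma exists_monomial_eq_apply_of_homDeg_eq_one {w : Fin q → ℕ} (hw : ∀ c, 1 ≤ w c)
    {β : Fin q → ℕ} (hβ : homDeg w β = 1) : ∃ c, w c = 1 ∧ ∀ y, monomial β y = y c := by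
  obtain ⟨c₀, hc₀⟩ : ∃ c, β c ≠ 0 := by
    by_contra! h
    simp [homDeg, h] at hβ
  have hpair : ∀ c ≠ c₀, w c₀ * β c₀ + w c * β c ≤ 1 := fun c hc => by
    rw [← hβ, homDeg, ← sum_pair (f := fun c => w c * β c) hc.symm]
    exact sum_le_sum_of_subset (subset_univ _)
  have hwβ₀ : w c₀ * β c₀ = 1 := le_antisymm
    (hβ ▸ single_le_sum (f := fun c => w c * β c) (fun _ _ => Nat.zero_le _) (mem_univ c₀))
    (Nat.mul_pos (hw c₀) (Nat.pos_of_ne_zero hc₀))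
  have hβ_eq_zero : ∀ c ≠ c₀, β c = 0 := fun c hc =>
    (Nat.mul_eq_zero.1 (show w c * β c = 0 by have := hpair c hc; omega)).resolve_left
      (by have := hw c; omega)
  refine ⟨c₀, (mul_eq_one.1 hwβ₀).1, fun y => ?_⟩
  rw [monomial, prod_eq_single c₀ (fun c _ hc => by rw [hβ_eq_zero c hc, pow_zero]) (by simp),
    (mul_eq_one.1 hwβ₀).2, pow_one]

lemma continuous_monomial (β : Fin q → ℕ) : Continuous (monomial β) :=
  continuous_finsetProd _ fun c _ => (continuous_apply c).pow _

lemma integrable_monomial {w : Fin q → ℕ} {μ : Measure (Fin q → ℝ)} {D : ℕ}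
    (hmom : HasFiniteHomMoments w μ D) {β : Fin q → ℕ} (hβ : homDeg w β ≤ D) :
    Integrable (monomial β) μ := by
  refine (hmom β hβ).mono' (continuous_monomial β).aestronglyMeasurable (.of_forall fun y => ?_)
  simp [monomial]

lemma integral_monomial_eq_zero_of_homDeg_eq_one {w : Fin q → ℕ} (hw : ∀ c, 1 ≤ w c)
    {μ : Measure (Fin q → ℝ)} (hcent : IsCenteredMeasure w μ) {β : Fin q → ℕ}
    (hβ : homDeg w β = 1) : ∫ y, monomial β y ∂μ = 0 := by
  obtain ⟨c, hc, hβc⟩ := exists_monomial_eq_apply_of_homDeg_eq_one hw hβ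
  simp_rw [hβc]
  exact hcent c hc

noncomputable def momentBound (μ : Measure (Fin q → ℝ)) (D : ℕ) : ℝ :=
  1 + ∑ β : Fin q → Fin (D + 1), |∫ y, monomial (fun c => (β c : ℕ)) y ∂μ|

lemma one_le_momentBound (μ : Measure (Fin q → ℝ)) (D : ℕ) : 1 ≤ momentBound μ D :=
  le_add_of_nonneg_right (sum_nonneg fun _ _ => abs_nonneg _)

lemma abs_integral_monomial_le_momentBound (μ : Measure (Fin q → ℝ)) {D : ℕ}
    {β : Fin q → ℕ} (hβ : ∀ c, β c ≤ D) : |∫ y, monomial β y ∂μ| ≤ momentBound μ D :=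
  le_add_of_nonneg_of_le zero_le_one <| single_le_sum
    (f := fun β : Fin q → Fin (D + 1) => |∫ y, monomial (fun c => (β c : ℕ)) y ∂μ|)
    (fun _ _ => abs_nonneg _) (mem_univ fun c => ⟨β c, Nat.lt_succ_of_le (hβ c)⟩)

section Sites

variable {ι α : Type*} [Fintype ι] [DecidableEq α]

def siteExp (σ : ι → α) (e : ι → Fin q → ℕ) (i : α) : Fin q → ℕ := ∑ p with σ p = i, e p

variable (σ : ι → α) (e : ι → Fin q → ℕ)

lemma prod_monomial_comp [Fintype α] (x : α → Fin q → ℝ) :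
    ∏ p, monomial (e p) (x (σ p)) = ∏ i, monomial (siteExp σ e i) (x i) := by
  rw [← prod_fiberwise univ σ]
  refine prod_congr rfl fun i _ => ?_
  rw [siteExp, monomial_sum]
  exact prod_congr rfl fun p hp => by rw [(mem_filter.1 hp).2]

lemma sum_homDeg_siteExp [Fintype α] (w : Fin q → ℕ) :
    ∑ i, homDeg w (siteExp σ e i) = ∑ p, homDeg w (e p) := by
  simp only [siteExp, homDeg_sum]
  exact sum_fiberwise univ σ _

variable {σ e} {w : Fin q → ℕ}

lemma card_fiber_le_homDeg_siteExp (he : ∀ p, 1 ≤ homDeg w (e p)) (i : α) :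
    #{p | σ p = i} ≤ homDeg w (siteExp σ e i) := by
  rw [siteExp, homDeg_sum]
  simpa using card_nsmul_le_sum _ _ 1 fun p _ => he p

lemma card_filter_mem_add_two_mul_card_image_sdiff_le [Fintype α] (he : ∀ p, 1 ≤ homDeg w (e p))
    (hσ : ∀ i, homDeg w (siteExp σ e i) ≠ 1) (H : Finset α) :
    #{p | σ p ∈ H} + 2 * #(univ.image σ \ H) ≤ ∑ p, homDeg w (e p) := by
  set W := fun i => homDeg w (siteExp σ e i)
  have hH : #{p | σ p ∈ H} ≤ ∑ i ∈ H, W i := by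
    rw [← sum_card_fiberwise_eq_card_filter]
    exact sum_le_sum fun i _ => card_fiber_le_homDeg_siteExp (σ := σ) he i
  have hImage : 2 * #(univ.image σ \ H) ≤ ∑ i ∈ univ.image σ \ H, W i := by
    rw [mul_comm, ← smul_eq_mul]
    refine card_nsmul_le_sum _ _ _ fun i hi => ?_
    obtain ⟨p, -, rfl⟩ := mem_image.1 (mem_sdiff.1 hi).1
    have hfiber := card_fiber_le_homDeg_siteExp (σ := σ) he (σ p)
    have hpos : 0 < #{p' | σ p' = σ p} := card_pos.2 ⟨p, by simp⟩
    have := hσ (σ p)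
    simp only [W]
    omega
  calc _ ≤ ∑ i ∈ H, W i + ∑ i ∈ univ.image σ \ H, W i := add_le_add hH hImage
    _ = ∑ i ∈ H ∪ (univ.image σ \ H), W i := (sum_union disjoint_sdiff).symm
    _ ≤ ∑ i, W i := sum_le_sum_of_subset (subset_univ _)
    _ = _ := sum_homDeg_siteExp σ e w

end Sites

section Moments

variable {ι α : Type*} [Fintype ι] [Fintype α] [DecidableEq α]
  {w : Fin q → ℕ} {μ : Measure (Fin q → ℝ)} [IsProbabilityMeasure μ] {D : ℕ}
  {e : ι → Fin q → ℕ}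

lemma homDeg_siteExp_le (hD : ∑ p, homDeg w (e p) ≤ D) (σ : ι → α) (i : α) :
    homDeg w (siteExp σ e i) ≤ D :=
  (single_le_sum (f := fun i => homDeg w (siteExp σ e i)) (fun _ _ => Nat.zero_le _)
    (mem_univ i)).trans ((sum_homDeg_siteExp σ e w).trans_le hD)

lemma integrable_prod_monomial_comp (hmom : HasFiniteHomMoments w μ D)
    (hD : ∑ p, homDeg w (e p) ≤ D) (σ : ι → α) :
    Integrable (fun x : α → Fin q → ℝ => ∏ p, monomial (e p) (x (σ p)))
      (Measure.pi fun _ => μ) := by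
  simp_rw [prod_monomial_comp σ e]
  exact Integrable.fintype_prod fun i => integrable_monomial hmom (homDeg_siteExp_le hD σ i)

lemma integral_prod_monomial_comp (σ : ι → α) :
    ∫ x : α → Fin q → ℝ, ∏ p, monomial (e p) (x (σ p)) ∂(Measure.pi fun _ => μ) =
      ∏ i, ∫ y, monomial (siteExp σ e i) y ∂μ := by
  simp_rw [prod_monomial_comp σ e]
  exact integral_fintype_prod_eq_prod _

lemma abs_integral_monomial_siteExp_le (hw : ∀ c, 1 ≤ w c) (hD : ∑ p, homDeg w (e p) ≤ D)
    (σ : ι → α) (i : α) :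
    |∫ y, monomial (siteExp σ e i) y ∂μ| ≤ momentBound μ D ^ #{p | σ p = i} := by
  rcases eq_or_ne #{p | σ p = i} 0 with h | h
  · simp [siteExp, card_eq_zero.1 h, monomial]
  · exact (abs_integral_monomial_le_momentBound μ fun c =>
      (le_homDeg hw _ c).trans (homDeg_siteExp_le hD σ i)).trans
      (le_self_pow₀ (one_le_momentBound μ D) h)

lemma abs_integral_prod_monomial_comp_le (hw : ∀ c, 1 ≤ w c)
    (hD : ∑ p, homDeg w (e p) ≤ D) (σ : ι → α) :
    |∫ x : α → Fin q → ℝ, ∏ p, monomial (e p) (x (σ p)) ∂(Measure.pi fun _ => μ)| ≤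
      momentBound μ D ^ Fintype.card ι := by
  rw [integral_prod_monomial_comp, abs_prod, ← card_univ,
    card_eq_sum_card_fiberwise (f := σ) (t := univ) (fun _ _ => mem_univ _), ← prod_pow_eq_pow_sum]
  exact prod_le_prod (fun _ _ => abs_nonneg _)
    fun i _ => abs_integral_monomial_siteExp_le hw hD σ i

lemma integral_sum_prod_monomial_le (hw : ∀ c, 1 ≤ w c) (hcent : IsCenteredMeasure w μ)
    (hmom : HasFiniteHomMoments w μ D) (hD : ∑ p, homDeg w (e p) ≤ D) (S : Finset (ι → α)) :
    ∫ x : α → Fin q → ℝ, ∑ σ ∈ S, ∏ p, monomial (e p) (x (σ p)) ∂(Measure.pi fun _ => μ) ≤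
      #{σ ∈ S | ∀ i, homDeg w (siteExp σ e i) ≠ 1} * momentBound μ D ^ Fintype.card ι := by
  rw [integral_finsetSum _ fun σ _ => integrable_prod_monomial_comp hmom hD σ]
  have hvanish : ∀ σ ∈ S, ∫ x : α → Fin q → ℝ, ∏ p, monomial (e p) (x (σ p))
      ∂(Measure.pi fun _ => μ) ≠ 0 → ∀ i, homDeg w (siteExp σ e i) ≠ 1 := by
    intro σ _ hne i hi
    rw [integral_prod_monomial_comp] at hne
    exact hne (prod_eq_zero (mem_univ i) (integral_monomial_eq_zero_of_homDeg_eq_one hw hcent hi))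
  rw [← sum_filter_of_ne hvanish, ← nsmul_eq_mul]
  exact sum_le_card_nsmul _ _ _ fun σ _ =>
    (le_abs_self _).trans (abs_integral_prod_monomial_comp_le hw hD σ)

end Moments

section Counting

variable {ι α : Type*} [Fintype ι] [DecidableEq ι] [Fintype α] [DecidableEq α]

lemma card_filter_card_image_inter_sdiff_le (H : Finset α) (a b : ℕ) :
    #{σ : ι → α | #(univ.image σ ∩ H) = a ∧ #(univ.image σ \ H) = b} ≤
      #H ^ a * #Hᶜ ^ b * (a + b) ^ Fintype.card ι := by
  let P := powersetCard a H ×ˢ powersetCard b Hᶜ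
  calc _ ≤ #(P.biUnion fun A => Fintype.piFinset fun _ : ι => A.1 ∪ A.2) := by
        refine card_le_card fun σ hσ => ?_
        obtain ⟨ha, hb⟩ := (mem_filter.1 hσ).2
        refine mem_biUnion.2 ⟨(univ.image σ ∩ H, univ.image σ \ H), ?_, ?_⟩
        · simp only [P, mem_product, mem_powersetCard, ha, hb, inter_subset_right, and_true,
            true_and]
          exact fun i hi => mem_compl.2 (mem_sdiff.1 hi).2
        · refine Fintype.mem_piFinset.2 fun i => ?_
          rw [union_comm, sdiff_union_inter]
          exact mem_image_of_mem σ (mem_univ i)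
    _ ≤ ∑ A ∈ P, #(Fintype.piFinset fun _ : ι => A.1 ∪ A.2) := card_biUnion_le
    _ ≤ ∑ A ∈ P, (a + b) ^ Fintype.card ι := sum_le_sum fun A hA => by
        simp only [P, mem_product, mem_powersetCard] at hA
        rw [Fintype.card_piFinset, prod_const, card_univ]
        gcongr
        exact (card_union_le _ _).trans (by rw [hA.1.2, hA.2.2])
    _ = (#H).choose a * (#Hᶜ).choose b * (a + b) ^ Fintype.card ι := by
        rw [sum_const, card_product, card_powersetCard, card_powersetCard, smul_eq_mul]
    _ ≤ _ := by gcongr <;> exact Nat.choose_le_pow _ _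

lemma pow_mul_pow_mul_pow_le {M N a b m k : ℕ} (hM : 1 ≤ M) (hMN : M ≤ N) (hab : a + b ≤ k)
    (hbm : b + m ≤ k) : M ^ a * N ^ b * N ^ m ≤ M ^ m * N ^ k := by
  have hN : 1 ≤ N := hM.trans hMN
  rcases le_total a m with ham | hma
  · rw [mul_assoc, ← pow_add]
    exact Nat.mul_le_mul (Nat.pow_le_pow_right hM ham) (Nat.pow_le_pow_right hN hbm)
  · obtain ⟨c, rfl⟩ := Nat.exists_eq_add_of_le hma
    calc M ^ (m + c) * N ^ b * N ^ m = M ^ m * (M ^ c * N ^ (b + m)) := by ring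
      _ ≤ M ^ m * (N ^ c * N ^ (b + m)) := by gcongr
      _ = M ^ m * N ^ (m + c + b) := by ring
      _ ≤ M ^ m * N ^ k := Nat.mul_le_mul_left _ (Nat.pow_le_pow_right hN (by omega))

lemma card_filter_profile_mul_pow_le {H : Finset α} (hH : H.Nonempty) {a b m k : ℕ}
    (hab : a + b ≤ k) (hbm : b + m ≤ k) :
    #{σ : ι → α | #(univ.image σ ∩ H) = a ∧ #(univ.image σ \ H) = b} * Fintype.card α ^ m ≤
      (k + 1) ^ Fintype.card ι * #H ^ m * Fintype.card α ^ k := by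
  calc _ ≤ #H ^ a * #Hᶜ ^ b * (a + b) ^ Fintype.card ι * Fintype.card α ^ m :=
        Nat.mul_le_mul_right _ (card_filter_card_image_inter_sdiff_le H a b)
    _ ≤ #H ^ a * Fintype.card α ^ b * (k + 1) ^ Fintype.card ι * Fintype.card α ^ m :=
        Nat.mul_le_mul_right _ (Nat.mul_le_mul
          (Nat.mul_le_mul_left _ (Nat.pow_le_pow_left (card_le_univ _) _))
          (Nat.pow_le_pow_left (by omega) _))
    _ = #H ^ a * Fintype.card α ^ b * Fintype.card α ^ m * (k + 1) ^ Fintype.card ι := by ring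
    _ ≤ #H ^ m * Fintype.card α ^ k * (k + 1) ^ Fintype.card ι :=
        Nat.mul_le_mul_right _ (pow_mul_pow_mul_pow_le (card_pos.2 hH) (card_le_univ H) hab hbm)
    _ = _ := by ring

lemma card_filter_card_image_le_mul_pow_le {H : Finset α} (hH : H.Nonempty) (m k : ℕ) :
    #{σ : ι → α | #(univ.image σ) ≤ k ∧ m + #(univ.image σ \ H) ≤ k} * Fintype.card α ^ m ≤
      (k + 1) ^ (Fintype.card ι + 2) * #H ^ m * Fintype.card α ^ k := by
  set profile : (ι → α) → ℕ × ℕ := fun σ => (#(univ.image σ ∩ H), #(univ.image σ \ H))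
  set t := (range (k + 1) ×ˢ range (k + 1)).filter fun ab => ab.1 + ab.2 ≤ k ∧ ab.2 + m ≤ k
  have hmaps : ∀ σ ∈ ({σ | #(univ.image σ) ≤ k ∧ m + #(univ.image σ \ H) ≤ k} :
      Finset (ι → α)), profile σ ∈ t := fun σ hσ => by
    have := (mem_filter.1 hσ).2
    have : #(univ.image σ ∩ H) + #(univ.image σ \ H) = #(univ.image σ) :=
      card_inter_add_card_sdiff _ _
    simp only [t, profile, mem_filter, mem_product, mem_range]
    omega
  have ht : #t ≤ (k + 1) ^ 2 := by
    simpa [sq] using card_filter_le (range (k + 1) ×ˢ range (k + 1)) _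
  rw [card_eq_sum_card_fiberwise hmaps, sum_mul]
  calc _ ≤ ∑ _ab ∈ t, (k + 1) ^ Fintype.card ι * #H ^ m * Fintype.card α ^ k := by
        refine sum_le_sum fun ⟨a, b⟩ hab => ?_
        obtain ⟨hab, hbm⟩ := (mem_filter.1 hab).2
        refine le_trans (Nat.mul_le_mul_right _ (card_le_card fun σ hσ => ?_))
          (card_filter_profile_mul_pow_le hH hab hbm)
        simpa [profile] using (mem_filter.1 hσ).2
    _ ≤ (k + 1) ^ 2 * ((k + 1) ^ Fintype.card ι * #H ^ m * Fintype.card α ^ k) := by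
        rw [sum_const, smul_eq_mul]
        gcongr
    _ = _ := by ring

end Counting

section Expansion

variable {α κ : Type*}

def piRows (T : Finset (κ → α)) (m : ℕ) : Finset (Fin m × κ → α) :=
  (Fintype.piFinset fun _ : Fin m => T).map (Equiv.curry _ _ _).symm.toEmbedding

lemma mem_piRows {T : Finset (κ → α)} {m : ℕ} {σ : Fin m × κ → α} :
    σ ∈ piRows T m ↔ ∀ j, (fun k => σ (j, k)) ∈ T := by
  simp only [piRows, mem_map_equiv, Fintype.mem_piFinset]
  rfl

lemma sum_prod_pow_eq_sum_piRows [Fintype κ] (T : Finset (κ → α)) (g : κ → α → ℝ) (m : ℕ) :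
    (∑ ℓ ∈ T, ∏ k, g k (ℓ k)) ^ m = ∑ σ ∈ piRows T m, ∏ p : Fin m × κ, g p.2 (σ p) := by
  rw [← Fin.prod_const, prod_univ_sum, piRows, sum_map]
  exact sum_congr rfl fun L _ =>
    (Fintype.prod_prod_type (fun p : Fin m × κ => g p.2 (L p.1 p.2))).symm

end Expansion

section Core

variable {α : Type*} [Fintype α] [DecidableEq α] {w : Fin q → ℕ} {r m n : ℕ}

lemma integral_abs_sum_prod_monomial_pow_le (hw : ∀ c, 1 ≤ w c) {μ : Measure (Fin q → ℝ)}
    [IsProbabilityMeasure μ] (hcent : IsCenteredMeasure w μ) {D : ℕ}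
    (hmom : HasFiniteHomMoments w μ D) (β : Fin r → Fin q → ℕ)
    (hD : 2 * m * ∑ k, homDeg w (β k) ≤ D) (T : Finset (Fin r → α)) :
    ∫ x : α → Fin q → ℝ, |∑ ℓ ∈ T, ∏ k, monomial (β k) (x (ℓ k))| ^ (2 * m)
        ∂(Measure.pi fun _ => μ) ≤
      #{σ ∈ piRows T (2 * m) | ∀ i, homDeg w (siteExp σ (fun p => β p.2) i) ≠ 1} *
        momentBound μ D ^ (2 * m * r) := by
  have hD' : ∑ p : Fin (2 * m) × Fin r, homDeg w (β p.2) ≤ D := by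
    simpa [Fintype.sum_prod_type] using hD
  have h := integral_sum_prod_monomial_le hw hcent hmom hD' (piRows T (2 * m))
  rw [Fintype.card_prod, Fintype.card_fin, Fintype.card_fin] at h
  refine le_of_eq_of_le (integral_congr_ae (.of_forall fun x => ?_)) h
  simp only [(even_two_mul m).pow_abs]
  exact sum_prod_pow_eq_sum_piRows T (fun k i => monomial (β k) (x i)) (2 * m)

lemma card_filter_piRows_mul_pow_le {β : Fin r → Fin q → ℕ} (hβ : ∀ k, 1 ≤ homDeg w (β k))
    (hβn : ∑ k, homDeg w (β k) ≤ n) {H : Finset α} (hH : H.Nonempty) {T : Finset (Fin r → α)}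
    (hT : ∀ ℓ ∈ T, ∃ k, ℓ k ∈ H) :
    #{σ ∈ piRows T (2 * m) | ∀ i, homDeg w (siteExp σ (fun p => β p.2) i) ≠ 1} *
        Fintype.card α ^ m ≤
      (m * n + 1) ^ (2 * m * r + 2) * #H ^ m * Fintype.card α ^ (m * n) := by
  have he : ∀ p : Fin (2 * m) × Fin r, 1 ≤ homDeg w (β p.2) := fun p => hβ p.2
  have hdeg : ∑ p : Fin (2 * m) × Fin r, homDeg w (β p.2) ≤ 2 * (m * n) :=
    calc _ = 2 * m * ∑ k, homDeg w (β k) := by simp [Fintype.sum_prod_type]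
      _ ≤ 2 * (m * n) := by rw [mul_assoc]; gcongr
  have hadmissible : {σ ∈ piRows T (2 * m) | ∀ i, homDeg w (siteExp σ (fun p => β p.2) i) ≠ 1} ⊆
      ({σ | #(univ.image σ) ≤ m * n ∧ m + #(univ.image σ \ H) ≤ m * n} : Finset _) := by
    intro σ hσ
    obtain ⟨hσT, hσ⟩ := mem_filter.1 hσ
    choose k hk using fun j => hT _ (mem_piRows.1 hσT j)
    have hrows : 2 * m ≤ #{p | σ p ∈ H} := by
      simpa using card_le_card_of_injOn (s := univ) (fun j => (j, k j))
        (fun j _ => by simpa using hk j) (fun j₁ _ j₂ _ h => congrArg Prod.fst h)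
    -- if `σ` occupies `a` sites in `H` and `b` outside, the case `H` gives `2m + 2b ≤ 2mn`
    -- and the case `∅` gives `2 (a + b) ≤ 2mn`
    have hhead := card_filter_mem_add_two_mul_card_image_sdiff_le he hσ H
    have hall := card_filter_mem_add_two_mul_card_image_sdiff_le he hσ ∅
    simp only [notMem_empty, filter_false, card_empty, sdiff_empty, zero_add] at hall
    simp only [mem_filter, mem_univ, true_and]
    omega
  calc _ ≤ #({σ | #(univ.image σ) ≤ m * n ∧ m + #(univ.image σ \ H) ≤ m * n} :
        Finset (Fin (2 * m) × Fin r → α)) * Fintype.card α ^ m := by gcongr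
    _ ≤ _ := by
      simpa using card_filter_card_image_le_mul_pow_le (ι := Fin (2 * m) × Fin r) hH m (m * n)

theorem integral_abs_sum_prod_monomial_pow_mul_le (hw : ∀ c, 1 ≤ w c)
    {μ : Measure (Fin q → ℝ)} [IsProbabilityMeasure μ] (hcent : IsCenteredMeasure w μ)
    (hmom : HasFiniteHomMoments w μ (2 * m * n)) (β : Fin r → Fin q → ℕ)
    (hβ : ∀ k, 1 ≤ homDeg w (β k)) (hβn : ∑ k, homDeg w (β k) ≤ n) {H : Finset α}
    (hH : H.Nonempty) (T : Finset (Fin r → α)) (hT : ∀ ℓ ∈ T, ∃ k, ℓ k ∈ H) :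
    (∫ x : α → Fin q → ℝ, |∑ ℓ ∈ T, ∏ k, monomial (β k) (x (ℓ k))| ^ (2 * m)
        ∂(Measure.pi fun _ => μ)) * Fintype.card α ^ m ≤
      (m * n + 1) ^ (2 * m * r + 2) * momentBound μ (2 * m * n) ^ (2 * m * r) * #H ^ m *
        Fintype.card α ^ (m * n) := by
  have hM : 0 ≤ momentBound μ (2 * m * n) ^ (2 * m * r) :=
    pow_nonneg (zero_le_one.trans (one_le_momentBound μ _)) _
  have hcount : (_ : ℝ) ≤ _ := Nat.cast_le.2 (card_filter_piRows_mul_pow_le (m := m) hβ hβn hH hT)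
  push_cast at hcount
  calc _ ≤ #{σ ∈ piRows T (2 * m) | ∀ i, homDeg w (siteExp σ (fun p => β p.2) i) ≠ 1} *
          momentBound μ (2 * m * n) ^ (2 * m * r) * Fintype.card α ^ m := by
        gcongr
        exact integral_abs_sum_prod_monomial_pow_le hw hcent hmom β (by gcongr) T
    _ = #{σ ∈ piRows T (2 * m) | ∀ i, homDeg w (siteExp σ (fun p => β p.2) i) ≠ 1} *
          Fintype.card α ^ m * momentBound μ (2 * m * n) ^ (2 * m * r) := by ring
    _ ≤ (m * n + 1) ^ (2 * m * r + 2) * #H ^ m * Fintype.card α ^ (m * n) *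
          momentBound μ (2 * m * n) ^ (2 * m * r) := mul_le_mul_of_nonneg_right hcount hM
    _ = _ := by ring

end Core

def blockExp (p : Finset (Fin q) × (Fin q → ℕ)) : Fin q → ℕ :=
  fun c => if c ∈ p.1 then p.2 c else 0

lemma prod_pow_eq_monomial_blockExp (p : Finset (Fin q) × (Fin q → ℕ)) (y : Fin q → ℝ) :
    ∏ c ∈ p.1, y c ^ p.2 c = monomial (blockExp p) y := by
  simp [monomial, blockExp, pow_ite, prod_ite_mem]

lemma homDeg_blockExp (w : Fin q → ℕ) (p : Finset (Fin q) × (Fin q → ℕ)) :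
    homDeg w (blockExp p) = ∑ c ∈ p.1, w c * p.2 c := by
  simp [homDeg, blockExp, mul_ite, sum_ite_mem]

lemma sum_homDeg_blockExp (w : Fin q → ℕ) (B : List (Finset (Fin q) × (Fin q → ℕ))) :
    ∑ k : Fin B.length, homDeg w (blockExp (B.get k)) = ustatHomDeg w B := by
  simp only [ustatHomDeg, homDeg_blockExp, List.get_eq_getElem]
  exact Fin.sum_univ_fun_getElem B (fun p => ∑ c ∈ p.1, w c * p.2 c)

lemma one_le_homDeg_blockExp {w : Fin q → ℕ} (hw : ∀ c, 1 ≤ w c)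
    {p : Finset (Fin q) × (Fin q → ℕ)} (hp : p.1.Nonempty ∧ ∀ c ∈ p.1, 0 < p.2 c) :
    1 ≤ homDeg w (blockExp p) := by
  obtain ⟨⟨c, hc⟩, hpos⟩ := hp
  rw [homDeg_blockExp]
  exact (Nat.mul_pos (hw c) (hpos c hc)).trans_le
    (single_le_sum (f := fun c => w c * p.2 c) (fun _ _ => Nat.zero_le _) hc)

lemma eq_sum_prod_monomial (B : List (Finset (Fin q) × (Fin q → ℕ))) {N : ℕ}
    (x : Fin N → Fin q → ℝ) :
    Ustat B x = ∑ ℓ : (Fin B.length → Fin N) with StrictMono ℓ,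
      ∏ k, monomial (blockExp (B.get k)) (x (ℓ k)) := by
  simp only [Ustat, prod_pow_eq_monomial_blockExp]

lemma sum_strictMono_natAdd {M : Type*} [AddCommMonoid M] {r N N' : ℕ} (h : N' + (N - N') = N)
    (f : (Fin r → Fin N) → M) :
    ∑ ℓ : (Fin r → Fin (N - N')) with StrictMono ℓ, f (fun k => Fin.cast h (Fin.natAdd N' (ℓ k))) =
      ∑ ℓ : (Fin r → Fin N) with StrictMono ℓ ∧ ∀ k, N' ≤ ((ℓ k : Fin N) : ℕ), f ℓ := by
  refine sum_bij' (fun ℓ _ k => Fin.cast h (Fin.natAdd N' (ℓ k)))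
    (fun ℓ hℓ k => ⟨ℓ k - N', by have := (mem_filter.1 hℓ).2.2 k; omega⟩) ?_ ?_ ?_ ?_ ?_
  · intro ℓ hℓ
    simp only [mem_filter, mem_univ, true_and] at hℓ ⊢
    exact ⟨fun k₁ k₂ hk => Fin.strictMono_natAdd N' (hℓ hk), fun k => by simp⟩
  · intro ℓ hℓ
    simp only [mem_filter, mem_univ, true_and] at hℓ ⊢
    intro k₁ k₂ hk
    have := hℓ.2 k₁
    have := Fin.lt_def.1 (hℓ.1 hk)
    simp only [Fin.lt_def]
    omega
  · intro ℓ _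
    ext k
    simp
  · intro ℓ hℓ
    ext k
    have := (mem_filter.1 hℓ).2.2 k
    simp only [Fin.val_cast, Fin.val_natAdd]
    omega
  · exact fun _ _ => rfl

lemma sub_natAdd_eq_sum (B : List (Finset (Fin q) × (Fin q → ℕ))) {N N' : ℕ}
    (h : N' + (N - N') = N) (x : Fin N → Fin q → ℝ) :
    Ustat B x - Ustat B (fun i : Fin (N - N') => x (Fin.cast h (Fin.natAdd N' i))) =
      ∑ ℓ : (Fin B.length → Fin N) with StrictMono ℓ ∧ ¬ ∀ k, N' ≤ ((ℓ k : Fin N) : ℕ),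
        ∏ k, monomial (blockExp (B.get k)) (x (ℓ k)) := by
  rw [eq_sum_prod_monomial, eq_sum_prod_monomial,
    sum_strictMono_natAdd h fun ℓ => ∏ k, monomial (blockExp (B.get k)) (x (ℓ k)),
    ← sum_filter_add_sum_filter_not _ fun ℓ => ∀ k, N' ≤ ((ℓ k : Fin N) : ℕ), filter_filter,
    filter_filter, add_sub_cancel_left]

end Ustat

/-- Let `m, n ≥ 1` and let `μ` be a centered Borel probability measure on `ℝ^q` with
`2mn` finite homogeneous moments, and let `U_α` be a generalized U-statistic of
homogeneous degree at most `n`.  There is `C = C(μ, q, m, n) > 0` such that for all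
`1 ≤ N' ≤ N`, writing `x ∼ μ^{⊗N}` as the concatenation of its first `N'` entries `x₀`
and its last `N − N'` entries `x_t`,
`E[|U_α(x) − U_α(x_t)|^{2m}] ≤ C · N^{mn} · (N'/N)^m`. -/
theorem ustat_tail_bound {q s : ℕ}
    (w : Fin q → ℕ) (hw : ∀ c, 1 ≤ w c ∧ w c ≤ s)
    (m n : ℕ)
    (μ : Measure (Fin q → ℝ)) [IsProbabilityMeasure μ]
    (hcent : IsCenteredMeasure w μ)
    (hmom : HasFiniteHomMoments w μ (2 * m * n))
    (B : List (Finset (Fin q) × (Fin q → ℕ))) (hB : ValidBlocks B)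
    (hdeg : ustatHomDeg w B ≤ n) :
    ∃ C : ℝ, 0 < C ∧ ∀ N N' : ℕ, 1 ≤ N' → ∀ h2 : N' ≤ N,
      (∫ x : Fin N → Fin q → ℝ,
          |Ustat B x -
              Ustat B (fun i : Fin (N - N') =>
                x (Fin.cast (by omega) (Fin.natAdd N' i)))| ^ (2 * m)
        ∂(Measure.pi fun _ : Fin N => μ)) ≤
        C * (N : ℝ) ^ (m * n) * ((N' : ℝ) / (N : ℝ)) ^ m := by
  have hw₁ : ∀ c, 1 ≤ w c := fun c => (hw c).1
  have hM := Ustat.one_le_momentBound μ (2 * m * n)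
  refine ⟨(m * n + 1) ^ (2 * m * B.length + 2) *
      Ustat.momentBound μ (2 * m * n) ^ (2 * m * B.length),
    mul_pos (by positivity) (pow_pos (by linarith) _), fun N N' hN' hN'N => ?_⟩
  set H : Finset (Fin N) := {i | (i : ℕ) < N'}
  have hH : #H = N' := by simp [H, Fin.card_filter_val_lt, hN'N]
  have hT : ∀ ℓ ∈ ({ℓ | StrictMono ℓ ∧ ¬ ∀ k, N' ≤ ((ℓ k : Fin N) : ℕ)} :
      Finset (Fin B.length → Fin N)), ∃ k, ℓ k ∈ H :=
    fun ℓ hℓ => by simpa [H] using (mem_filter.1 hℓ).2.2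
  have hbound := Ustat.integral_abs_sum_prod_monomial_pow_mul_le hw₁ hcent hmom
    (fun k => Ustat.blockExp (B.get k))
    (fun k => Ustat.one_le_homDeg_blockExp hw₁ (hB.2 _ (List.get_mem B k)))
    ((Ustat.sum_homDeg_blockExp w B).trans_le hdeg)
    (H := H) ⟨⟨0, by omega⟩, mem_filter.2 ⟨mem_univ _, hN'⟩⟩ _ hT
  rw [Fintype.card_fin, hH] at hbound
  simp_rw [Ustat.sub_natAdd_eq_sum]
  have hN : (0 : ℝ) < N := by norm_cast; omega
  calc _ ≤ _ := (le_div_iff₀ (by positivity)).2 hbound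
    _ = _ := by rw [div_pow]; field_simp
end

section
/- Let U_α be a generalized U-statistic of homogeneous degree n ≥ 1. For every A > 0 and δ > 0 there is an integer M = M(A, δ, n) such that the following holds: if μ is a centered Borel probability measure on ℝ^q with M finite homogeneous moments, then there is a constant C = C(μ, q, A, δ, n) > 0 such that for every N ≥ 1, μ^{⊗N}{ x ∈ (ℝ^q)^N : |U_α(x)| > N^{n/2 + δ} } ≤ C · N^{−A}. -/
open MeasureTheory Finset
open scoped Classical

/-! Moment method. The `2m₀`-th power of `U_α` expands into a sum over index maps
`L : Fin (2m₀) × Fin r → Fin N`, and under `μ^{⊗N}` each term factorizes over the coordinates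
hit by `L`. A coordinate carrying total homogeneous degree one contributes a centered linear
factor, so only maps with at most `m₀ n` distinct values survive, whence
`∫ U_α^{2m₀} = O(N^{m₀ n})`. Markov's inequality at the threshold `N^{n/2+δ}` then gives
`O(N^{-2m₀δ})`, and `m₀ > A/δ`. -/
noncomputable def monomialFn {q : ℕ} (β : Fin q → ℕ) (v : Fin q → ℝ) : ℝ := ∏ c, v c ^ β c

section Monomial

variable {q : ℕ} {w : Fin q → ℕ} {β : Fin q → ℕ}

@[simp]
lemma monomialFn_zero : monomialFn (0 : Fin q → ℕ) = 1 := by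
  ext v
  simp [monomialFn]

lemma continuous_monomialFn (β : Fin q → ℕ) : Continuous (monomialFn β) := by
  unfold monomialFn
  fun_prop

lemma prod_monomialFn {ι : Type*} (P : Finset ι) (β : ι → Fin q → ℕ) (v : Fin q → ℝ) :
    ∏ p ∈ P, monomialFn (β p) v = monomialFn (∑ p ∈ P, β p) v := by
  simp only [monomialFn, Finset.sum_apply, ← Finset.prod_pow_eq_pow_sum]
  exact Finset.prod_comm

lemma homDeg_sum {ι : Type*} (w : Fin q → ℕ) (P : Finset ι) (β : ι → Fin q → ℕ) :
    homDeg w (∑ p ∈ P, β p) = ∑ p ∈ P, homDeg w (β p) := by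
  simp only [homDeg, Finset.sum_apply, Finset.mul_sum]
  exact Finset.sum_comm

lemma le_homDeg (hw : ∀ c, 1 ≤ w c) (β : Fin q → ℕ) (c : Fin q) : β c ≤ homDeg w β :=
  calc β c ≤ w c * β c := Nat.le_mul_of_pos_left _ (hw c)
    _ ≤ homDeg w β := single_le_sum (f := fun c => w c * β c) (fun _ _ => Nat.zero_le _)
      (mem_univ c)

lemma eq_zero_of_homDeg_eq_zero (hw : ∀ c, 1 ≤ w c) (h : homDeg w β = 0) : β = 0 :=
  funext fun c => Nat.eq_zero_of_le_zero (h ▸ le_homDeg hw β c)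

lemma exists_monomialFn_eq_eval_of_homDeg_eq_one (hw : ∀ c, 1 ≤ w c) (h : homDeg w β = 1) :
    ∃ c, w c = 1 ∧ monomialFn β = fun v => v c := by
  obtain ⟨c, -, hc⟩ := exists_ne_zero_of_sum_ne_zero (h.trans_ne one_ne_zero)
  have hsplit := add_sum_erase univ (fun c => w c * β c) (mem_univ c)
  rw [← homDeg, h] at hsplit
  have hc1 : w c * β c = 1 := by omega
  have hrest : ∀ c' ∈ univ.erase c, β c' = 0 := fun c' hc' => by
    have := (sum_eq_zero_iff.mp (by omega : ∑ c ∈ univ.erase c, w c * β c = 0)) c' hc'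
    simpa [Nat.one_le_iff_ne_zero.mp (hw c')] using this
  obtain ⟨hwc, hβc⟩ := mul_eq_one.mp hc1
  refine ⟨c, hwc, funext fun v => ?_⟩
  rw [monomialFn, ← mul_prod_erase univ _ (mem_univ c), hβc,
    prod_congr rfl fun c' hc' => by rw [hrest c' hc', pow_zero]]
  simp

lemma integrable_monomialFn {μ : Measure (Fin q → ℝ)} {M : ℕ} (hmom : HasFiniteHomMoments w μ M)
    (h : homDeg w β ≤ M) : Integrable (monomialFn β) μ :=
  (hmom β h).mono' (continuous_monomialFn β).aestronglyMeasurable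
    (ae_of_all _ fun v => by simp [monomialFn])

lemma integral_monomialFn_eq_zero_of_homDeg_eq_one {μ : Measure (Fin q → ℝ)}
    (hw : ∀ c, 1 ≤ w c) (hcen : IsCenteredMeasure w μ) (h : homDeg w β = 1) :
    ∫ v, monomialFn β v ∂μ = 0 := by
  obtain ⟨c, hc, hβ⟩ := exists_monomialFn_eq_eval_of_homDeg_eq_one hw h
  rw [hβ]
  exact hcen c hc

lemma exists_abs_integral_monomialFn_le_pow (μ : Measure (Fin q → ℝ)) [IsProbabilityMeasure μ]
    (hw : ∀ c, 1 ≤ w c) (M : ℕ) :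
    ∃ K : ℝ, 1 ≤ K ∧ ∀ β, homDeg w β ≤ M → |∫ v, monomialFn β v ∂μ| ≤ K ^ homDeg w β := by
  -- The form `K ^ homDeg` multiplies over coordinates, the unhit ones (degree `0`) giving `1`.
  set K := 1 + ∑ γ : Fin q → Fin (M + 1), |∫ v, monomialFn (fun c => (γ c : ℕ)) v ∂μ|
  have hK1 : 1 ≤ K := le_add_of_nonneg_right (sum_nonneg fun _ _ => abs_nonneg _)
  refine ⟨K, hK1, fun β hβ => ?_⟩
  rcases Nat.eq_zero_or_pos (homDeg w β) with h0 | hpos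
  · rw [h0, eq_zero_of_homDeg_eq_zero hw h0]
    simp
  let γ : Fin q → Fin (M + 1) := fun c => ⟨β c, Nat.lt_succ_of_le ((le_homDeg hw β c).trans hβ)⟩
  calc |∫ v, monomialFn β v ∂μ|
      ≤ ∑ γ : Fin q → Fin (M + 1), |∫ v, monomialFn (fun c => (γ c : ℕ)) v ∂μ| :=
        single_le_sum (f := fun γ : Fin q → Fin (M + 1) =>
          |∫ v, monomialFn (fun c => (γ c : ℕ)) v ∂μ|) (fun _ _ => abs_nonneg _) (mem_univ γ)
    _ ≤ K := le_add_of_nonneg_left zero_le_one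
    _ ≤ K ^ homDeg w β := le_self_pow₀ hK1 hpos.ne'

end Monomial

section ProductMeasure

variable {ι κ E : Type*} [Fintype ι] [Fintype κ] [DecidableEq κ]

lemma prod_comp_eq_prod_prod_fiber {M : Type*} [CommMonoid M] (φ : ι → E → M) (L : ι → κ)
    (x : κ → E) :
    ∏ p, φ p (x (L p)) = ∏ i, ∏ p with L p = i, φ p (x i) := by
  rw [← prod_fiberwise univ L]
  exact prod_congr rfl fun i _ => prod_congr rfl fun p hp => by rw [(mem_filter.mp hp).2]

variable [MeasurableSpace E]

lemma integral_prod_comp_eq_prod_integral (μ : Measure E) [SigmaFinite μ] (φ : ι → E → ℝ)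
    (L : ι → κ) :
    ∫ x, ∏ p, φ p (x (L p)) ∂(Measure.pi fun _ : κ => μ) =
      ∏ i, ∫ v, ∏ p with L p = i, φ p v ∂μ := by
  simp_rw [prod_comp_eq_prod_prod_fiber φ L]
  exact integral_fintype_prod_eq_prod (fun i v => ∏ p with L p = i, φ p v)

lemma integrable_prod_comp (μ : Measure E) [SigmaFinite μ] {φ : ι → E → ℝ} (L : ι → κ)
    (hφ : ∀ i, Integrable (fun v => ∏ p with L p = i, φ p v) μ) :
    Integrable (fun x => ∏ p, φ p (x (L p))) (Measure.pi fun _ : κ => μ) := by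
  simp_rw [prod_comp_eq_prod_prod_fiber φ L]
  exact Integrable.fintype_prod hφ

end ProductMeasure

lemma exists_comp_eq_of_card_image_le {ι α : Type*} [Fintype ι] [Nonempty α] [DecidableEq α]
    {D : ℕ} (L : ι → α) (h : #(univ.image L) ≤ D) :
    ∃ (e : ι → Fin D) (v : Fin D → α), v ∘ e = L := by
  let emb : univ.image L ↪ Fin D := (univ.image L).equivFin.toEmbedding.trans (Fin.castLEEmb h)
  exact ⟨fun p => emb ⟨L p, mem_image_of_mem L (mem_univ p)⟩,
    Function.extend emb Subtype.val fun _ => Classical.arbitrary α,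
    funext fun p => emb.injective.extend_apply _ _ _⟩

lemma card_filter_card_image_le {ι α : Type*} [Fintype ι] [DecidableEq ι] [Fintype α]
    [Nonempty α] [DecidableEq α] (D : ℕ) :
    #{L : ι → α | #(univ.image L) ≤ D} ≤ D ^ Fintype.card ι * Fintype.card α ^ D := by
  calc #{L : ι → α | #(univ.image L) ≤ D}
      ≤ #(univ.image fun ev : (ι → Fin D) × (Fin D → α) => ev.2 ∘ ev.1) := by
        refine card_le_card fun L hL => ?_
        obtain ⟨e, v, hL⟩ := exists_comp_eq_of_card_image_le L (mem_filter.mp hL).2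
        exact mem_image.mpr ⟨(e, v), mem_univ _, hL⟩
    _ ≤ D ^ Fintype.card ι * Fintype.card α ^ D := by
        refine card_image_le.trans ?_
        simp

section MonomialProducts

variable {q : ℕ} {w : Fin q → ℕ} {μ : Measure (Fin q → ℝ)} {ι κ : Type*} [Fintype ι]
  [Fintype κ] [DecidableEq κ] (β : ι → Fin q → ℕ)

lemma sum_homDeg_fiber (L : ι → κ) :
    ∑ i, homDeg w (∑ p with L p = i, β p) = ∑ p, homDeg w (β p) := by
  simp_rw [homDeg_sum]
  exact sum_fiberwise univ L _

lemma homDeg_fiber_le (L : ι → κ) (i : κ) :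
    homDeg w (∑ p with L p = i, β p) ≤ ∑ p, homDeg w (β p) := by
  rw [← sum_homDeg_fiber β L]
  exact single_le_sum (f := fun i => homDeg w (∑ p with L p = i, β p)) (fun _ _ => Nat.zero_le _)
    (mem_univ i)

lemma integral_prod_monomialFn_comp [SigmaFinite μ] (L : ι → κ) :
    ∫ x, ∏ p, monomialFn (β p) (x (L p)) ∂(Measure.pi fun _ : κ => μ) =
      ∏ i, ∫ v, monomialFn (∑ p with L p = i, β p) v ∂μ := by
  simp_rw [integral_prod_comp_eq_prod_integral, prod_monomialFn]

lemma integrable_prod_monomialFn_comp [SigmaFinite μ] {M : ℕ} (hmom : HasFiniteHomMoments w μ M)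
    (hM : ∑ p, homDeg w (β p) ≤ M) (L : ι → κ) :
    Integrable (fun x => ∏ p, monomialFn (β p) (x (L p))) (Measure.pi fun _ : κ => μ) := by
  refine integrable_prod_comp μ L fun i => ?_
  simp_rw [prod_monomialFn]
  exact integrable_monomialFn hmom ((homDeg_fiber_le β L i).trans hM)

lemma integral_prod_monomialFn_comp_eq_zero [SigmaFinite μ] (hw : ∀ c, 1 ≤ w c)
    (hcen : IsCenteredMeasure w μ) (hβ : ∀ p, 1 ≤ homDeg w (β p)) (L : ι → κ)
    (hL : ∑ p, homDeg w (β p) < 2 * #(univ.image L)) :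
    ∫ x, ∏ p, monomialFn (β p) (x (L p)) ∂(Measure.pi fun _ : κ => μ) = 0 := by
  rw [integral_prod_monomialFn_comp]
  by_contra hne
  suffices h2 : ∀ i ∈ univ.image L, 2 ≤ homDeg w (∑ p with L p = i, β p) by
    refine hL.not_ge ?_
    calc 2 * #(univ.image L) = ∑ _i ∈ univ.image L, 2 := by rw [sum_const, smul_eq_mul, mul_comm]
      _ ≤ ∑ i ∈ univ.image L, homDeg w (∑ p with L p = i, β p) := sum_le_sum h2
      _ ≤ ∑ i, homDeg w (∑ p with L p = i, β p) := sum_le_sum_of_subset (subset_univ _)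
      _ = ∑ p, homDeg w (β p) := sum_homDeg_fiber β L
  intro i hi
  obtain ⟨p, -, rfl⟩ := mem_image.mp hi
  have h1 : 1 ≤ homDeg w (∑ p' with L p' = L p, β p') := by
    rw [homDeg_sum]
    exact (hβ p).trans (single_le_sum (f := fun p => homDeg w (β p)) (fun _ _ => Nat.zero_le _)
      (mem_filter.mpr ⟨mem_univ p, rfl⟩))
  have hne1 : homDeg w (∑ p' with L p' = L p, β p') ≠ 1 := fun h =>
    hne (prod_eq_zero (mem_univ _) (integral_monomialFn_eq_zero_of_homDeg_eq_one hw hcen h))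
  omega

lemma abs_integral_prod_monomialFn_comp_le [SigmaFinite μ] {K : ℝ} {M : ℕ}
    (hK : ∀ γ, homDeg w γ ≤ M → |∫ v, monomialFn γ v ∂μ| ≤ K ^ homDeg w γ)
    (hM : ∑ p, homDeg w (β p) ≤ M) (L : ι → κ) :
    |∫ x, ∏ p, monomialFn (β p) (x (L p)) ∂(Measure.pi fun _ : κ => μ)| ≤
      K ^ ∑ p, homDeg w (β p) := by
  rw [integral_prod_monomialFn_comp, abs_prod, ← sum_homDeg_fiber β L, ← prod_pow_eq_pow_sum]
  exact prod_le_prod (fun _ _ => abs_nonneg _) fun i _ =>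
    hK _ ((homDeg_fiber_le β L i).trans hM)

end MonomialProducts

lemma measure_lt_abs_le_ofReal_integral_pow_div {Ω : Type*} [MeasurableSpace Ω] {P : Measure Ω}
    [IsFiniteMeasure P] {f : Ω → ℝ} {m : ℕ} (hm : Even m)
    (hf : Integrable (fun x => f x ^ m) P) {t : ℝ} (ht : 0 < t) :
    P {x | t < |f x|} ≤ ENNReal.ofReal ((∫ x, f x ^ m ∂P) / t ^ m) := by
  have hmarkov :=
    mul_meas_ge_le_integral_of_nonneg (ae_of_all _ fun x => hm.pow_nonneg (f x)) hf (t ^ m)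
  calc P {x | t < |f x|} ≤ P {x | t ^ m ≤ f x ^ m} := measure_mono fun x hx => by
        simpa only [Set.mem_ofPred_eq, hm.pow_abs] using pow_le_pow_left₀ ht.le (le_of_lt hx) m
    _ = ENNReal.ofReal (P.real {x | t ^ m ≤ f x ^ m}) := (ofReal_measureReal).symm
    _ ≤ _ := ENNReal.ofReal_le_ofReal ((le_div_iff₀' (pow_pos ht m)).mpr hmarkov)

lemma natCast_pow_le_rpow_neg_mul_rpow_pow {N m₀ n : ℕ} {A δ : ℝ} (hN : 1 ≤ N)
    (hA : A ≤ 2 * m₀ * δ) :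
    (N : ℝ) ^ (m₀ * n) ≤ (N : ℝ) ^ (-A) * ((N : ℝ) ^ ((n : ℝ) / 2 + δ)) ^ (2 * m₀) := by
  have hN1 : (1 : ℝ) ≤ N := by exact_mod_cast hN
  rw [← Real.rpow_natCast, ← Real.rpow_natCast, ← Real.rpow_mul (by positivity),
    ← Real.rpow_add (by positivity)]
  refine Real.rpow_le_rpow_of_exponent_le hN1 ?_
  push_cast
  linarith

noncomputable def monomialSum {q N : ℕ} {κ : Type*} [Fintype κ] (β : κ → Fin q → ℕ)
    (S : Finset (κ → Fin N)) (x : Fin N → Fin q → ℝ) : ℝ :=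
  ∑ ℓ ∈ S, ∏ k, monomialFn (β k) (x (ℓ k))

section MonomialSum

variable {q N : ℕ} {w : Fin q → ℕ} {μ : Measure (Fin q → ℝ)} {κ : Type*} [Fintype κ]
  (β : κ → Fin q → ℕ) (S : Finset (κ → Fin N))

lemma monomialSum_pow (m : ℕ) (x : Fin N → Fin q → ℝ) :
    monomialSum β S x ^ m = ∑ t ∈ Fintype.piFinset fun _ : Fin m => S,
      ∏ p : Fin m × κ, monomialFn (β p.2) (x (Function.uncurry t p)) := by
  rw [monomialSum, sum_pow']
  exact sum_congr rfl fun t _ => (Fintype.prod_prod_type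
    (f := fun p : Fin m × κ => monomialFn (β p.2) (x (Function.uncurry t p)))).symm

lemma sum_homDeg_snd (m : ℕ) :
    ∑ p : Fin m × κ, homDeg w (β p.2) = m * ∑ k, homDeg w (β k) := by
  simp [Fintype.sum_prod_type]

lemma integrable_monomialSum_pow [SigmaFinite μ] {M m : ℕ} (hmom : HasFiniteHomMoments w μ M)
    (hM : m * ∑ k, homDeg w (β k) ≤ M) :
    Integrable (fun x => monomialSum β S x ^ m) (Measure.pi fun _ : Fin N => μ) := by
  simp_rw [monomialSum_pow]
  refine integrable_finsetSum _ fun t _ => ?_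
  exact integrable_prod_monomialFn_comp (fun p : Fin m × κ => β p.2) hmom
    ((sum_homDeg_snd β m).trans_le hM) (Function.uncurry t)

lemma integral_monomialSum_pow_le [SigmaFinite μ] [NeZero N] {K : ℝ} {M : ℕ} (m₀ : ℕ)
    (hw : ∀ c, 1 ≤ w c) (hcen : IsCenteredMeasure w μ) (hmom : HasFiniteHomMoments w μ M)
    (hK : ∀ γ, homDeg w γ ≤ M → |∫ v, monomialFn γ v ∂μ| ≤ K ^ homDeg w γ)
    (hβ : ∀ k, 1 ≤ homDeg w (β k)) (hM : 2 * m₀ * ∑ k, homDeg w (β k) ≤ M) :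
    ∫ x, monomialSum β S x ^ (2 * m₀) ∂(Measure.pi fun _ : Fin N => μ) ≤
      K ^ (2 * m₀ * ∑ k, homDeg w (β k)) *
        ((m₀ * ∑ k, homDeg w (β k) : ℕ) : ℝ) ^ (2 * m₀ * Fintype.card κ) *
        (N : ℝ) ^ (m₀ * ∑ k, homDeg w (β k)) := by
  set n := ∑ k, homDeg w (β k)
  set γ : Fin (2 * m₀) × κ → Fin q → ℕ := fun p => β p.2
  have hγ : ∑ p, homDeg w (γ p) = 2 * m₀ * n := sum_homDeg_snd β _
  set I : (Fin (2 * m₀) × κ → Fin N) → ℝ := fun L =>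
    ∫ x, ∏ p, monomialFn (γ p) (x (L p)) ∂(Measure.pi fun _ : Fin N => μ)
  have hsmall : ∀ L, I L ≠ 0 → #(univ.image L) ≤ m₀ * n := fun L hL => by
    by_contra hlt
    exact hL (integral_prod_monomialFn_comp_eq_zero γ hw hcen (fun p => hβ p.2) L
      (by rw [hγ, mul_assoc]; omega))
  have hI : ∀ L, |I L| ≤ K ^ (2 * m₀ * n) := fun L =>
    hγ ▸ abs_integral_prod_monomialFn_comp_le γ hK (hγ ▸ hM) L
  calc ∫ x, monomialSum β S x ^ (2 * m₀) ∂(Measure.pi fun _ : Fin N => μ)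
      = ∑ t ∈ Fintype.piFinset fun _ : Fin (2 * m₀) => S, I (Function.uncurry t) := by
        simp_rw [monomialSum_pow]
        exact integral_finsetSum _ fun t _ =>
          integrable_prod_monomialFn_comp γ hmom (hγ ▸ hM) _
    _ ≤ ∑ t, |I (Function.uncurry t)| :=
        (sum_le_sum fun t _ => le_abs_self _).trans
          (sum_le_sum_of_subset_of_nonneg (subset_univ _) fun _ _ _ => abs_nonneg _)
    _ = ∑ L, |I L| := (Equiv.curry _ _ _).symm.sum_comp fun L => |I L|
    _ = ∑ L with #(univ.image L) ≤ m₀ * n, |I L| :=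
        (sum_filter_of_ne fun L _ hL => hsmall L (abs_ne_zero.mp hL)).symm
    _ ≤ #{L : Fin (2 * m₀) × κ → Fin N | #(univ.image L) ≤ m₀ * n} * K ^ (2 * m₀ * n) := by
        simpa using sum_le_card_nsmul _ _ _ fun L _ => hI L
    _ = K ^ (2 * m₀ * n) * #{L : Fin (2 * m₀) × κ → Fin N | #(univ.image L) ≤ m₀ * n} :=
        mul_comm _ _
    _ ≤ K ^ (2 * m₀ * n) * (((m₀ * n) ^ (2 * m₀ * Fintype.card κ) * N ^ (m₀ * n) : ℕ) : ℝ) := by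
        have hcard := card_filter_card_image_le (ι := Fin (2 * m₀) × κ) (α := Fin N) (m₀ * n)
        simp only [Fintype.card_prod, Fintype.card_fin] at hcard
        gcongr
        exact (abs_nonneg _).trans (hI fun _ => 0)
    _ = K ^ (2 * m₀ * n) * ((m₀ * n : ℕ) : ℝ) ^ (2 * m₀ * Fintype.card κ) *
        (N : ℝ) ^ (m₀ * n) := by
        push_cast
        ring

lemma measure_lt_abs_monomialSum_le [IsFiniteMeasure μ] [NeZero N] {K A δ : ℝ} {M n : ℕ}
    (m₀ : ℕ) (hw : ∀ c, 1 ≤ w c) (hcen : IsCenteredMeasure w μ)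
    (hmom : HasFiniteHomMoments w μ M)
    (hK : ∀ γ, homDeg w γ ≤ M → |∫ v, monomialFn γ v ∂μ| ≤ K ^ homDeg w γ)
    (hβ : ∀ k, 1 ≤ homDeg w (β k)) (hn : ∑ k, homDeg w (β k) = n) (hM : 2 * m₀ * n ≤ M)
    (hA : A ≤ 2 * m₀ * δ) :
    (Measure.pi fun _ : Fin N => μ) {x | (N : ℝ) ^ ((n : ℝ) / 2 + δ) < |monomialSum β S x|} ≤
      ENNReal.ofReal (K ^ (2 * m₀ * n) * ((m₀ * n : ℕ) : ℝ) ^ (2 * m₀ * Fintype.card κ) *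
        (N : ℝ) ^ (-A)) := by
  set C := K ^ (2 * m₀ * n) * ((m₀ * n : ℕ) : ℝ) ^ (2 * m₀ * Fintype.card κ)
  set t := (N : ℝ) ^ ((n : ℝ) / 2 + δ)
  have ht : 0 < t := Real.rpow_pos_of_pos (Nat.cast_pos.mpr (NeZero.pos N)) _
  have hC : 0 ≤ C := mul_nonneg (((even_two_mul m₀).mul_right n).pow_nonneg K) (by positivity)
  have hmoment := integral_monomialSum_pow_le β S m₀ hw hcen hmom hK hβ (hn ▸ hM)
  rw [hn] at hmoment
  refine (measure_lt_abs_le_ofReal_integral_pow_div (even_two_mul m₀)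
    (integrable_monomialSum_pow β S hmom (hn ▸ hM)) ht).trans (ENNReal.ofReal_le_ofReal ?_)
  rw [div_le_iff₀ (pow_pos ht _)]
  calc _ ≤ C * (N : ℝ) ^ (m₀ * n) := hmoment
    _ ≤ C * ((N : ℝ) ^ (-A) * t ^ (2 * m₀)) :=
        mul_le_mul_of_nonneg_left (natCast_pow_le_rpow_neg_mul_rpow_pow NeZero.one_le hA) hC
    _ = C * (N : ℝ) ^ (-A) * t ^ (2 * m₀) := (mul_assoc _ _ _).symm

end MonomialSum

section Blocks

variable {q : ℕ}

def blockExp (p : Finset (Fin q) × (Fin q → ℕ)) : Fin q → ℕ :=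
  fun c => if c ∈ p.1 then p.2 c else 0

lemma monomialFn_blockExp (p : Finset (Fin q) × (Fin q → ℕ)) (v : Fin q → ℝ) :
    monomialFn (blockExp p) v = ∏ c ∈ p.1, v c ^ p.2 c := by
  simp only [monomialFn, blockExp, pow_ite, pow_zero]
  rw [prod_ite_mem, univ_inter]

lemma homDeg_blockExp (w : Fin q → ℕ) (p : Finset (Fin q) × (Fin q → ℕ)) :
    homDeg w (blockExp p) = ∑ c ∈ p.1, w c * p.2 c := by
  simp only [homDeg, blockExp, mul_ite, mul_zero]
  rw [sum_ite_mem, univ_inter]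

lemma sum_homDeg_blockExp (w : Fin q → ℕ) (B : List (Finset (Fin q) × (Fin q → ℕ))) :
    ∑ k : Fin B.length, homDeg w (blockExp (B.get k)) = ustatHomDeg w B := by
  simp only [homDeg_blockExp, ustatHomDeg]
  simpa [List.get_eq_getElem] using Fin.sum_univ_fun_getElem B fun p => ∑ c ∈ p.1, w c * p.2 c

lemma one_le_homDeg_blockExp {w : Fin q → ℕ} (hw : ∀ c, 1 ≤ w c)
    {B : List (Finset (Fin q) × (Fin q → ℕ))} (hB : ValidBlocks B) (k : Fin B.length) :
    1 ≤ homDeg w (blockExp (B.get k)) := by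
  obtain ⟨⟨c, hc⟩, hpos⟩ := hB.2 _ (List.get_mem B k)
  rw [homDeg_blockExp]
  exact (Nat.mul_le_mul (hw c) (hpos c hc)).trans
    (single_le_sum (f := fun c => w c * (B.get k).2 c) (fun _ _ => Nat.zero_le _) hc)

lemma ustat_eq_monomialSum (B : List (Finset (Fin q) × (Fin q → ℕ))) {N : ℕ}
    (x : Fin N → Fin q → ℝ) :
    Ustat B x = monomialSum (fun k => blockExp (B.get k)) {ℓ | StrictMono ℓ} x := by
  simp only [Ustat, monomialSum, monomialFn_blockExp]

end Blocks

theorem ustat_large_values_general (n : ℕ) (hn : 1 ≤ n) (A δ : ℝ) (hδ : 0 < δ) :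
    ∃ M : ℕ, ∀ (q s : ℕ), 1 ≤ q → 1 ≤ s →
      ∀ w : Fin q → ℕ, (∀ c, 1 ≤ w c ∧ w c ≤ s) →
      ∀ B : List (Finset (Fin q) × (Fin q → ℕ)), ValidBlocks B → ustatHomDeg w B = n →
      ∀ μ : Measure (Fin q → ℝ), IsProbabilityMeasure μ →
        IsCenteredMeasure w μ → HasFiniteHomMoments w μ M →
        ∃ C : ℝ, 0 < C ∧ ∀ N : ℕ, 1 ≤ N →
          (Measure.pi fun _ : Fin N => μ)
              {x : Fin N → Fin q → ℝ | (N : ℝ) ^ ((n : ℝ) / 2 + δ) < |Ustat B x|} ≤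
            ENNReal.ofReal (C * (N : ℝ) ^ (-A)) := by
  set m₀ := ⌈A / δ⌉₊ + 1
  have hm₀ : A ≤ 2 * m₀ * δ := by
    have : A ≤ m₀ * δ := (div_le_iff₀ hδ).mp ((Nat.le_ceil _).trans (by simp [m₀]))
    nlinarith [m₀.cast_nonneg (α := ℝ)]
  refine ⟨2 * m₀ * n, fun q s _ _ w hw B hB hBdeg μ _ hcen hmom => ?_⟩
  have hw1 : ∀ c, 1 ≤ w c := fun c => (hw c).1
  obtain ⟨K, hK1, hK⟩ := exists_abs_integral_monomialFn_le_pow μ hw1 (2 * m₀ * n)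
  have hD : 0 < m₀ * n := Nat.mul_pos (Nat.succ_pos ⌈A / δ⌉₊) hn
  refine ⟨K ^ (2 * m₀ * n) * ((m₀ * n : ℕ) : ℝ) ^ (2 * m₀ * B.length), by positivity,
    fun N hN => ?_⟩
  have : NeZero N := ⟨by omega⟩
  simp_rw [ustat_eq_monomialSum]
  simpa using measure_lt_abs_monomialSum_le _ _ m₀ hw1 hcen hmom hK
    (one_le_homDeg_blockExp hw1 hB) ((sum_homDeg_blockExp w B).trans hBdeg) le_rfl hm₀

/-- Let `U_α` be a generalized U-statistic of homogeneous degree `n ≥ 1`.  For every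
`A > 0` and `δ > 0` there is an integer `M = M(A, δ, n)` such that, if `μ` is a
centered Borel probability measure on `ℝ^q` with `M` finite homogeneous moments, then
there is `C = C(μ, q, A, δ, n) > 0` with
`μ^{⊗N}{ x : |U_α(x)| > N^{n/2 + δ} } ≤ C · N^{−A}` for all `N ≥ 1`. -/
theorem ustat_large_values (n : ℕ) (hn : 1 ≤ n) (A δ : ℝ) (hA : 0 < A) (hδ : 0 < δ) :
    ∃ M : ℕ, ∀ (q s : ℕ), 1 ≤ q → 1 ≤ s →
      ∀ w : Fin q → ℕ, (∀ c, 1 ≤ w c ∧ w c ≤ s) →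
      ∀ B : List (Finset (Fin q) × (Fin q → ℕ)), ValidBlocks B → ustatHomDeg w B = n →
      ∀ μ : Measure (Fin q → ℝ), IsProbabilityMeasure μ →
        IsCenteredMeasure w μ → HasFiniteHomMoments w μ M →
        ∃ C : ℝ, 0 < C ∧ ∀ N : ℕ, 1 ≤ N →
          (Measure.pi fun _ : Fin N => μ)
              {x : Fin N → Fin q → ℝ | (N : ℝ) ^ ((n : ℝ) / 2 + δ) < |Ustat B x|} ≤
            ENNReal.ofReal (C * (N : ℝ) ^ (-A)) :=
  ustat_large_values_general n hn A δ hδ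
end
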